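/- arXiv:2303.16814 — 9 statements merged into one kernel-verified Lean document; each statement's English description precedes it below -/
import Mathlib

section
/- (Blaschke selection theorem.) Let X be a proper metric space and let {C_m} be a sequence of nonempty compact subsets of X that is bounded, i.e. all C_m are contained in a single closed ball. Then there exist a subsequence {C_{m_k}} and a nonempty compact set C ⊆ X such that Metric.hausdorffDist C_{m_k} C → 0. -/
open Metric TopologicalSpace Set

/-! The nonempty compact subsets of a compact metric space form a compact space under the
Hausdorff distance. Transporting this along the isometric inclusion of the closed ball, the
nonempty compact sets contained in a fixed compact set form a compact subset of
`NonemptyCompacts X`, so a sequence of them has a convergent subsequence. -/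

namespace TopologicalSpace.NonemptyCompacts

variable {α β : Type*} [EMetricSpace α] [EMetricSpace β]

theorem isometry_map {f : α → β} (hf : Isometry f) :
    Isometry (NonemptyCompacts.map f hf.continuous) := fun _ _ =>
  hausdorffEDist_image hf

theorem isCompact_setOf_subset {B : Set α} (hB : IsCompact B) :
    IsCompact {K : NonemptyCompacts α | (K : Set α) ⊆ B} := by
  have : CompactSpace B := isCompact_iff_compactSpace.1 hB
  have hrange : {K : NonemptyCompacts α | (K : Set α) ⊆ B} =
      range (NonemptyCompacts.map ((↑) : B → α) continuous_subtype_val) := by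
    ext K
    refine ⟨fun hKB => ?_, ?_⟩
    · have hK : IsCompact ((↑) ⁻¹' (K : Set α) : Set B) := by
        rw [Subtype.isCompact_iff, Subtype.image_preimage_coe, inter_eq_right.2 hKB]
        exact K.isCompact
      obtain ⟨x, hx⟩ := K.nonempty
      refine ⟨⟨⟨_, hK⟩, ⟨⟨x, hKB hx⟩, hx⟩⟩, NonemptyCompacts.ext ?_⟩
      exact (Subtype.image_preimage_coe B K).trans (inter_eq_right.2 hKB)
    · rintro ⟨L, rfl⟩
      exact image_subset_iff.2 fun x _ => x.2
  rw [hrange]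
  exact isCompact_range (isometry_map isometry_subtype_coe).continuous

end TopologicalSpace.NonemptyCompacts

/-- Blaschke selection theorem: a uniformly bounded sequence of
nonempty compact subsets of a proper metric space has a subsequence converging
in the Hausdorff distance to a nonempty compact set. -/
theorem stmt_2 {X : Type*} [MetricSpace X] [ProperSpace X]
    (C : ℕ → Set X) (hCne : ∀ m, (C m).Nonempty) (hCcp : ∀ m, IsCompact (C m))
    (hbdd : ∃ z r, ∀ m, C m ⊆ Metric.closedBall z r) :
    ∃ φ : ℕ → ℕ, StrictMono φ ∧ ∃ D : Set X, D.Nonempty ∧ IsCompact D ∧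
      Filter.Tendsto (fun k => Metric.hausdorffDist (C (φ k)) D)
        Filter.atTop (nhds 0) := by
  obtain ⟨z, r, hC⟩ := hbdd
  let K : ℕ → NonemptyCompacts X := fun m => ⟨⟨C m, hCcp m⟩, hCne m⟩
  obtain ⟨L, -, φ, hφ, hKL⟩ :=
    (NonemptyCompacts.isCompact_setOf_subset (isCompact_closedBall z r)).tendsto_subseq
      (x := K) hC
  refine ⟨φ, hφ, L, L.nonempty, L.isCompact, ?_⟩
  exact tendsto_iff_dist_tendsto_zero.1 hKL
end

section
/- For every nonempty compact subset X of the hyperbolic plane H² and every ρ ≥ 0, the parallel domain satisfies Metric.diam (Metric.cthickening ρ X) = 2ρ + Metric.diam X. -/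
open UpperHalfPlane Real

/-- The semicircle geodesic through the upper half-plane. -/
noncomputable def semicircle (c r : ℝ) (hr : 0 < r) (t : ℝ) : UpperHalfPlane :=
  UpperHalfPlane.mk ⟨c - r * Real.tanh t, r / Real.cosh t⟩
    (by positivity)

lemma semicircle_isometry (c r : ℝ) (hr : 0 < r) : Isometry (semicircle c r hr) := by
  refine Isometry.of_dist_eq fun s t => ?_
  have hcs := Real.cosh_pos s
  have hct := Real.cosh_pos t
  rw [Real.dist_eq]
  rw [UpperHalfPlane.dist_eq_iff_eq_sq_sinh (abs_nonneg _)]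
  have him_s : (semicircle c r hr s).im = r / Real.cosh s := rfl
  have him_t : (semicircle c r hr t).im = r / Real.cosh t := rfl
  have hre : ((semicircle c r hr s : ℂ)) = ⟨c - r * Real.tanh s, r / Real.cosh s⟩ := rfl
  have hsinh_sq : Real.sinh (|s - t| / 2) ^ 2 = Real.sinh ((s - t) / 2) ^ 2 := by
    rcases abs_choice (s - t) with h | h
    · rw [h]
    · rw [h, show -(s - t) / 2 = -((s - t) / 2) by ring, Real.sinh_neg, neg_sq]
  rw [hsinh_sq]
  have hsq : Real.sinh ((s - t) / 2) ^ 2 = (Real.cosh (s - t) - 1) / 2 := by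
    have h1 : Real.cosh (2 * ((s - t) / 2)) =
        Real.cosh ((s - t) / 2) ^ 2 + Real.sinh ((s - t) / 2) ^ 2 := Real.cosh_two_mul _
    have h2 : Real.cosh ((s - t) / 2) ^ 2 = Real.sinh ((s - t) / 2) ^ 2 + 1 := Real.cosh_sq _
    have h3 : (2 : ℝ) * ((s - t) / 2) = s - t := by ring
    rw [h3] at h1
    linarith
  rw [hsq, Real.cosh_sub]
  have hdist : dist (semicircle c r hr s : ℂ) (semicircle c r hr t : ℂ) ^ 2 =
      ((c - r * Real.tanh s) - (c - r * Real.tanh t)) ^ 2 +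
        (r / Real.cosh s - r / Real.cosh t) ^ 2 := by
    rw [Complex.dist_eq_re_im]
    exact Real.sq_sqrt (by positivity)
  rw [hdist, him_s, him_t]
  rw [Real.tanh_eq_sinh_div_cosh, Real.tanh_eq_sinh_div_cosh]
  have h2s : Real.cosh s ^ 2 = Real.sinh s ^ 2 + 1 := Real.cosh_sq _
  have h2t : Real.cosh t ^ 2 = Real.sinh t ^ 2 + 1 := Real.cosh_sq _
  field_simp
  linear_combination (-2 * r ^ 2 * Real.cosh t ^ 2) * h2s -
    (2 * r ^ 2 * Real.cosh s ^ 2) * h2t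

/-- Through any two points of the upper half-plane there is an isometric copy of ℝ. -/
lemma exists_geodesic_line (x y : UpperHalfPlane) :
    ∃ γ : ℝ → UpperHalfPlane, Isometry γ ∧ ∃ s t : ℝ, γ s = x ∧ γ t = y := by
  by_cases hre : x.re = y.re
  · refine ⟨fun t => UpperHalfPlane.mk ⟨x.re, Real.exp t⟩ (Real.exp_pos t),
      UpperHalfPlane.isometry_vertical_line x.re, Real.log x.im, Real.log y.im, ?_, ?_⟩
    · apply UpperHalfPlane.ext
      apply Complex.ext
      · rfl
      · show Real.exp (Real.log x.im) = x.im
        exact Real.exp_log x.im_pos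
    · apply UpperHalfPlane.ext
      apply Complex.ext
      · exact hre
      · show Real.exp (Real.log y.im) = y.im
        exact Real.exp_log y.im_pos
  · -- semicircle through x and y
    set c : ℝ := (x.re ^ 2 + x.im ^ 2 - y.re ^ 2 - y.im ^ 2) / (2 * (x.re - y.re)) with hc
    have hxy : x.re - y.re ≠ 0 := sub_ne_zero.mpr hre
    have hkey : (x.re - c) ^ 2 + x.im ^ 2 = (y.re - c) ^ 2 + y.im ^ 2 := by
      have : 2 * c * (x.re - y.re) = x.re ^ 2 + x.im ^ 2 - y.re ^ 2 - y.im ^ 2 := by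
        rw [hc]; field_simp
      nlinarith [this]
    set r : ℝ := Real.sqrt ((x.re - c) ^ 2 + x.im ^ 2) with hrdef
    have hr : 0 < r := Real.sqrt_pos.mpr (by nlinarith [x.im_pos, sq_nonneg (x.re - c)])
    have hrx : (x.re - c) ^ 2 + x.im ^ 2 = r ^ 2 := (Real.sq_sqrt (by positivity)).symm
    have hry : (y.re - c) ^ 2 + y.im ^ 2 = r ^ 2 := hkey ▸ hrx
    refine ⟨semicircle c r hr, semicircle_isometry c r hr, ?_⟩
    have key : ∀ z : UpperHalfPlane, (z.re - c) ^ 2 + z.im ^ 2 = r ^ 2 →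
        semicircle c r hr (Real.arsinh ((c - z.re) / z.im)) = z := by
      intro z hz
      have hzim := z.im_pos
      set u : ℝ := (c - z.re) / z.im with hu
      have hsinh : Real.sinh (Real.arsinh u) = u := Real.sinh_arsinh u
      have hcosh : Real.cosh (Real.arsinh u) = r / z.im := by
        rw [Real.cosh_arsinh]
        rw [show (1 : ℝ) + u ^ 2 = (r / z.im) ^ 2 by
          rw [hu]; field_simp; nlinarith [hz]]
        exact Real.sqrt_sq (by positivity)
      apply UpperHalfPlane.ext
      apply Complex.ext
      · show c - r * Real.tanh (Real.arsinh u) = z.re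
        rw [Real.tanh_eq_sinh_div_cosh, hsinh, hcosh, hu]
        field_simp
        ring
      · show r / Real.cosh (Real.arsinh u) = z.im
        rw [hcosh]
        field_simp
    exact ⟨_, _, key x hrx, key y hry⟩

/-- Geodesic extension: points at distance exactly ρ beyond x and y. -/
lemma exists_extension (x y : UpperHalfPlane) (ρ : ℝ) (hρ : 0 ≤ ρ) :
    ∃ u v : UpperHalfPlane, dist u x = ρ ∧ dist v y = ρ ∧
      dist u v = dist x y + 2 * ρ := by
  obtain ⟨γ, hγ, s, t, hs, ht⟩ := exists_geodesic_line x y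
  rcases le_total s t with h | h
  · refine ⟨γ (s - ρ), γ (t + ρ), ?_, ?_, ?_⟩
    · rw [← hs, hγ.dist_eq, Real.dist_eq, abs_of_nonpos (by linarith), neg_sub]; ring
    · rw [← ht, hγ.dist_eq, Real.dist_eq, abs_of_nonneg (by linarith)]; ring
    · rw [← hs, ← ht, hγ.dist_eq, hγ.dist_eq, Real.dist_eq, Real.dist_eq,
        abs_of_nonpos (by linarith : s - ρ - (t + ρ) ≤ 0),
        abs_of_nonpos (by linarith : s - t ≤ 0)]
      ring
  · refine ⟨γ (s + ρ), γ (t - ρ), ?_, ?_, ?_⟩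
    · rw [← hs, hγ.dist_eq, Real.dist_eq, abs_of_nonneg (by linarith)]; ring
    · rw [← ht, hγ.dist_eq, Real.dist_eq, abs_of_nonpos (by linarith), neg_sub]; ring
    · rw [← hs, ← ht, hγ.dist_eq, hγ.dist_eq, Real.dist_eq, Real.dist_eq,
        abs_of_nonneg (by linarith : 0 ≤ s + ρ - (t - ρ)),
        abs_of_nonneg (by linarith : 0 ≤ s - t)]
      ring

/-- in the hyperbolic plane (upper half-plane model), the diameter
of the parallel domain of a nonempty compact set `X` at distance `ρ ≥ 0`
equals `2ρ + diam X`. -/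
theorem stmt_5 (X : Set UpperHalfPlane) (hXne : X.Nonempty) (hXcp : IsCompact X)
    (ρ : ℝ) (hρ : 0 ≤ ρ) :
    Metric.diam (Metric.cthickening ρ X) = 2 * ρ + Metric.diam X := by
  have hCcp : IsCompact (Metric.cthickening ρ X) := hXcp.cthickening
  have hCbd : Bornology.IsBounded (Metric.cthickening ρ X) := hCcp.isBounded
  have hle : Metric.diam (Metric.cthickening ρ X) ≤ 2 * ρ + Metric.diam X := by
    have := Metric.diam_cthickening_le X hρ
    linarith
  have hmem : ∀ x : UpperHalfPlane, x ∈ X → ∀ u : UpperHalfPlane, dist u x = ρ →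
      u ∈ Metric.cthickening ρ X := by
    intro x hx u hu
    exact Metric.mem_cthickening_of_dist_le u x ρ X hx (le_of_eq hu)
  have hge : ∀ x ∈ X, ∀ y ∈ X, dist x y + 2 * ρ ≤ Metric.diam (Metric.cthickening ρ X) := by
    intro x hx y hy
    obtain ⟨u, v, hu, hv, huv⟩ := exists_extension x y ρ hρ
    calc dist x y + 2 * ρ = dist u v := huv.symm
      _ ≤ Metric.diam (Metric.cthickening ρ X) :=
        Metric.dist_le_diam_of_mem hCbd (hmem x hx u hu) (hmem y hy v hv)
  obtain ⟨x₀, hx₀⟩ := hXne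
  have h2ρ : 2 * ρ ≤ Metric.diam (Metric.cthickening ρ X) := by
    have := hge x₀ hx₀ x₀ hx₀
    simpa using this
  have hdiamX : Metric.diam X ≤ Metric.diam (Metric.cthickening ρ X) - 2 * ρ := by
    apply Metric.diam_le_of_forall_dist_le (by linarith)
    intro x hx y hy
    have := hge x hx y hy
    linarith
  linarith
end

section
/- In the hyperbolic plane H², for every s > 0 and ε ≥ 0, the parallel domain of the horoball {z : s ≤ im z} at the ideal point ∞ is again a horoball at ∞: Metric.cthickening ε {z ∈ UpperHalfPlane : s ≤ im z} = {z ∈ UpperHalfPlane : s · Real.exp (−ε) ≤ im z}. Equivalently, for 0 < s ≤ r the nested horoballs {im ≥ r} ⊆ {im ≥ s} bound a horospherical strip of width Real.log (r/s): every point of {z : im z = s} is at distance exactly Real.log (r/s) from the horoball {z : r ≤ im z}. -/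
/-!
Since `dist z w ≥ |log (im z) - log (im w)|` in `ℍ`, with equality on vertical geodesics, the
distance from `z` to the horoball `{r ≤ im}` is `max (log (r / im z)) 0`, realised at the point
above `z` at height `r`. Hence `infDist z {s ≤ im} ≤ ε` exactly when `s * exp (-ε) ≤ im z`.
-/

open UpperHalfPlane Metric Real

theorem Metric.mem_cthickening_iff_infDist_le {X : Type*} [PseudoMetricSpace X] {δ : ℝ}
    {E : Set X} {x : X} (hδ : 0 ≤ δ) (hE : E.Nonempty) :
    x ∈ cthickening δ E ↔ infDist x E ≤ δ :=
  mem_cthickening_iff.trans (ENNReal.le_ofReal_iff_toReal_le (infEDist_ne_top hE) hδ)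

namespace UpperHalfPlane

theorem infDist_setOf_le_im {r : ℝ} (hr : 0 < r) (z : ℍ) :
    infDist z {w : ℍ | r ≤ w.im} = max (log (r / z.im)) 0 := by
  have hz : 0 < z.im := z.im_pos
  let top : ℍ := ⟨⟨z.re, r⟩, hr⟩
  have htop : top ∈ {w : ℍ | r ≤ w.im} := le_refl r
  refine le_antisymm ?_ ((le_infDist ⟨top, htop⟩).2 fun w hw => max_le ?_ dist_nonneg)
  · rcases le_or_gt r z.im with hzr | hzr
    · rw [infDist_zero_of_mem (s := {w : ℍ | r ≤ w.im}) hzr]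
      exact le_max_right _ _
    · calc infDist z {w : ℍ | r ≤ w.im} ≤ dist z top := infDist_le_dist_of_mem htop
        _ = log (r / z.im) := by
          rw [dist_of_re_eq (z := z) (w := top) rfl, dist_comm, Real.dist_eq,
            log_div hr.ne' hz.ne']
          exact abs_of_nonneg (sub_nonneg.2 (log_le_log hz hzr.le))
        _ ≤ max (log (r / z.im)) 0 := le_max_left _ _
  · calc log (r / z.im) = log r - log z.im := log_div hr.ne' hz.ne'
      _ ≤ log w.im - log z.im := by gcongr; exact hw
      _ ≤ dist (log w.im) (log z.im) := le_abs_self _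
      _ ≤ dist z w := dist_comm (log z.im) _ ▸ dist_log_im_le z w

theorem cthickening_setOf_le_im {s ε : ℝ} (hs : 0 < s) (hε : 0 ≤ ε) :
    cthickening ε {z : ℍ | s ≤ z.im} = {z : ℍ | s * exp (-ε) ≤ z.im} := by
  ext z
  rw [Set.mem_ofPred_eq, mem_cthickening_iff_infDist_le hε ⟨⟨⟨0, s⟩, hs⟩, le_refl s⟩,
    infDist_setOf_le_im hs, max_le_iff, and_iff_left hε, log_le_iff_le_exp (by positivity),
    div_le_iff₀ z.im_pos, exp_neg, ← div_eq_mul_inv, div_le_iff₀ (exp_pos ε), mul_comm]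

theorem infDist_setOf_le_im_of_im_le {r : ℝ} {z : ℍ} (hzr : z.im ≤ r) :
    infDist z {w : ℍ | r ≤ w.im} = log (r / z.im) := by
  rw [infDist_setOf_le_im (z.im_pos.trans_le hzr),
    max_eq_left (log_nonneg ((one_le_div z.im_pos).2 hzr))]

end UpperHalfPlane

/-- the parallel domain of a horoball at the ideal point `∞` of
the upper half-plane is again a horoball at `∞`:
`cthickening ε {im ≥ s} = {im ≥ s·e^{-ε}}`; equivalently, for `0 < s ≤ r`
every point of the horosphere `{im = s}` is at distance exactly `log (r/s)`
from the horoball `{im ≥ r}`. -/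
theorem stmt_8 :
    (∀ s : ℝ, 0 < s → ∀ ε : ℝ, 0 ≤ ε →
      Metric.cthickening ε {z : UpperHalfPlane | s ≤ z.im} =
        {z : UpperHalfPlane | s * Real.exp (-ε) ≤ z.im}) ∧
    (∀ s r : ℝ, 0 < s → s ≤ r → ∀ z : UpperHalfPlane, z.im = s →
      Metric.infDist z {w : UpperHalfPlane | r ≤ w.im} = Real.log (r / s)) :=
  ⟨fun _ hs _ hε => cthickening_setOf_le_im hs hε,
    fun _ _ _ hsr _ hz => hz ▸ infDist_setOf_le_im_of_im_le (hz ▸ hsr)⟩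
end

section
/- Let x ≠ y be points of H² and let s = {z ∈ H² : dist x z + dist z y = dist x y} be the geodesic segment joining them. If {C_m} is a sequence of convex bodies in H² with Metric.hausdorffDist C_m s → 0, then the minimal Fillmore widths stay bounded away from zero: there exist c > 0 and M ∈ ℕ such that w_F(C_m, i) ≥ c for every m ≥ M and every ideal point i ∈ ℝ ∪ {∞}; in particular liminf_{m→∞} (⨅ over ideal points i of w_F(C_m, i)) > 0. -/
open UpperHalfPlane

/-- The Busemann-type function attached to an ideal point of the hyperbolic
plane: ideal points are `ℝ ∪ {∞}`, encoded as `Option ℝ` with `none = ∞`.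
The horoballs at the ideal point `i` are the superlevel sets `{z : s ≤ beta i z}`. -/
noncomputable def beta : Option ℝ → UpperHalfPlane → ℝ
  | none, z => z.im
  | some b, z => z.im / ((z.re - b) ^ 2 + z.im ^ 2)

/-- The Fillmore width of a (nonempty compact) set `K` at the ideal point `i`:
the width of the horospherical strip between the two supporting horospheres
of `K` at `i`. -/
noncomputable def fillmoreWidth (K : Set UpperHalfPlane) (i : Option ℝ) : ℝ :=
  Real.log (sSup (beta i '' K)) - Real.log (sInf (beta i '' K))

/-- A subset of the hyperbolic plane is (hyperbolically) convex if with any two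
of its points it contains every point of the geodesic segment between them. -/
def HypConvex (K : Set UpperHalfPlane) : Prop :=
  ∀ x ∈ K, ∀ y ∈ K, ∀ z : UpperHalfPlane, dist x z + dist z y = dist x y → z ∈ K

/-! ### Auxiliary lemmas -/

lemma beta_pos (i : Option ℝ) (z : UpperHalfPlane) : 0 < beta i z := by
  cases i with
  | none => exact z.im_pos
  | some b =>
    exact div_pos z.im_pos (by positivity)

lemma continuous_beta (i : Option ℝ) : Continuous (beta i) := by
  cases i with
  | none => exact UpperHalfPlane.continuous_im
  | some b =>
    apply UpperHalfPlane.continuous_im.div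
    · exact ((UpperHalfPlane.continuous_re.sub continuous_const).pow 2).add
        (UpperHalfPlane.continuous_im.pow 2)
    · intro z
      have := z.im_pos
      positivity

/-- Horocyclic coordinates attached to an ideal point. -/
noncomputable def Pco : Option ℝ → UpperHalfPlane → ℝ
  | none, z => z.re
  | some b, z => (b - z.re) / ((z.re - b) ^ 2 + z.im ^ 2)

/-- The distance formula in the horocyclic coordinates attached to any ideal point. -/
lemma coords_eq (i : Option ℝ) (z w : UpperHalfPlane) :
    (Pco i z - Pco i w) ^ 2 + beta i z ^ 2 + beta i w ^ 2
      = Real.cosh (dist z w) * (2 * beta i z * beta i w) := by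
  have hz := z.im_pos
  have hw := w.im_pos
  cases i with
  | none =>
    simp only [Pco, beta]
    rw [UpperHalfPlane.cosh_dist']
    field_simp
  | some b =>
    have hDz : (0:ℝ) < (z.re - b) ^ 2 + z.im ^ 2 := by positivity
    have hDw : (0:ℝ) < (w.re - b) ^ 2 + w.im ^ 2 := by positivity
    simp only [Pco, beta]
    rw [UpperHalfPlane.cosh_dist']
    field_simp
    ring

/-- `log ∘ beta i` is 1-Lipschitz for the hyperbolic distance. -/
lemma abs_log_beta_sub_le (i : Option ℝ) (z w : UpperHalfPlane) :
    |Real.log (beta i z) - Real.log (beta i w)| ≤ dist z w := by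
  have hz := beta_pos i z
  have hw := beta_pos i w
  have h2 : (0:ℝ) < 2 * beta i z * beta i w := by positivity
  have e : Real.cosh (Real.log (beta i z) - Real.log (beta i w)) * (2 * beta i z * beta i w)
      = beta i z ^ 2 + beta i w ^ 2 := by
    rw [← Real.log_div hz.ne' hw.ne', Real.cosh_log (div_pos hz hw)]
    field_simp
  have h := coords_eq i z w
  have hcosh : Real.cosh (Real.log (beta i z) - Real.log (beta i w))
      ≤ Real.cosh (dist z w) := by
    have hle : Real.cosh (Real.log (beta i z) - Real.log (beta i w)) * (2 * beta i z * beta i w)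
        ≤ Real.cosh (dist z w) * (2 * beta i z * beta i w) := by
      rw [e, ← h]
      nlinarith [sq_nonneg (Pco i z - Pco i w)]
    exact le_of_mul_le_mul_right hle h2
  have habs := Real.cosh_le_cosh.mp hcosh
  rwa [abs_of_nonneg dist_nonneg] at habs

lemma eq_of_cosh_eq {a b : ℝ} (ha : 0 ≤ a) (hb : 0 ≤ b)
    (h : Real.cosh a = Real.cosh b) : a = b := by
  have h1 := Real.cosh_le_cosh.mp h.le
  have h2 := Real.cosh_le_cosh.mp h.ge
  rw [abs_of_nonneg ha, abs_of_nonneg hb] at h1 h2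
  linarith

set_option maxHeartbeats 1000000 in
/-- The key algebraic lemma: if `m` is the midpoint of `x` and `y` (encoded through the
three distance equations in horocyclic coordinates), then the `beta`-value at the midpoint
exceeds `C` times the `beta`-value at one of the endpoints. -/
lemma key_lemma (Cv u1 u2 u3 p1 p2 p3 : ℝ) (hC : 1 < Cv)
    (h1 : 0 < u1) (h2 : 0 < u2) (h3 : 0 < u3)
    (e1 : (p1 - p2) ^ 2 + u1 ^ 2 + u2 ^ 2 = 2 * Cv * u1 * u2)
    (e2 : (p2 - p3) ^ 2 + u2 ^ 2 + u3 ^ 2 = 2 * Cv * u2 * u3)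
    (e3 : (p1 - p3) ^ 2 + u1 ^ 2 + u3 ^ 2 = 2 * (2 * Cv ^ 2 - 1) * u1 * u3) :
    Cv * u1 ≤ u2 ∨ Cv * u3 ≤ u2 := by
  by_contra hcon
  push_neg at hcon
  obtain ⟨ha, hb⟩ := hcon
  have hpq : (p1 - p2) * (p3 - p2)
      = Cv * u2 * (u1 + u3) - u2 ^ 2 - u1 * u3 * (2 * Cv ^ 2 - 1) := by
    linear_combination (e1 + e2 - e3) / 2
  have hA : (p1 - p2) ^ 2 = 2 * Cv * u1 * u2 - u1 ^ 2 - u2 ^ 2 := by linarith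
  have hB : (p3 - p2) ^ 2 = 2 * Cv * u2 * u3 - u2 ^ 2 - u3 ^ 2 := by
    linear_combination e2
  have heq : ((p1 - p2) * (p3 - p2)) ^ 2
      = (2 * Cv * u1 * u2 - u1 ^ 2 - u2 ^ 2) * (2 * Cv * u2 * u3 - u2 ^ 2 - u3 ^ 2) := by
    rw [mul_pow, hA, hB]
  have hzero : (Cv ^ 2 - 1) * (u1 * u2 + u2 * u3 - 2 * Cv * u1 * u3) ^ 2 = 0 := by
    linear_combination
      heq - hpq * ((p1 - p2) * (p3 - p2)
        + (Cv * u2 * (u1 + u3) - u2 ^ 2 - u1 * u3 * (2 * Cv ^ 2 - 1)))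
  have hfac : u1 * u2 + u2 * u3 - 2 * Cv * u1 * u3 < 0 := by
    nlinarith [mul_lt_mul_of_pos_left hb h1, mul_lt_mul_of_pos_right ha h3]
  have hC2 : (0:ℝ) < Cv ^ 2 - 1 := by nlinarith
  have hF2 : (0:ℝ) < (u1 * u2 + u2 * u3 - 2 * Cv * u1 * u3) ^ 2 := by
    nlinarith [mul_pos (neg_pos.mpr hfac) (neg_pos.mpr hfac)]
  nlinarith [mul_pos hC2 hF2, hzero]

/-- Existence of midpoints in the hyperbolic plane. -/
lemma exists_midpoint (x y : UpperHalfPlane) :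
    ∃ m : UpperHalfPlane, dist x m = dist x y / 2 ∧ dist m y = dist x y / 2 := by
  set K : ℝ := Real.cosh (dist x y / 2) with hKdef
  have hK1 : 1 ≤ K := Real.one_le_cosh _
  have hK0 : 0 < K := lt_of_lt_of_le one_pos hK1
  have hxpos := x.im_pos
  have hypos := y.im_pos
  have hsum : (0:ℝ) < x.im + y.im := by linarith
  have hC' : Real.cosh (dist x y) = 2 * K ^ 2 - 1 := by
    have : dist x y = 2 * (dist x y / 2) := by ring
    rw [this, Real.cosh_two_mul, Real.sinh_sq, hKdef]
    ring
  have hcon : (x.re - y.re) ^ 2 + x.im ^ 2 + y.im ^ 2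
      = (2 * K ^ 2 - 1) * (2 * x.im * y.im) := by
    have h := UpperHalfPlane.cosh_dist' x y
    rw [hC'] at h
    have h2 : (0:ℝ) < 2 * x.im * y.im := by positivity
    field_simp at h
    linarith
  set um : ℝ := 2 * K * x.im * y.im / (x.im + y.im) with humdef
  set pm : ℝ := (x.re * y.im + y.re * x.im) / (x.im + y.im) with hpmdef
  have humpos : 0 < um := by positivity
  refine ⟨UpperHalfPlane.mk ⟨pm, um⟩ humpos, ?_, ?_⟩
  · -- dist x m = dist x y / 2
    have key : ((x.re - pm) ^ 2 + x.im ^ 2 + um ^ 2 - 2 * K * x.im * um) * (x.im + y.im) ^ 2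
        = x.im ^ 2 * ((x.re - y.re) ^ 2 + x.im ^ 2 + y.im ^ 2
            - (2 * K ^ 2 - 1) * (2 * x.im * y.im)) := by
      rw [humdef, hpmdef]
      field_simp
      ring
    have h4 : ((x.re - pm) ^ 2 + x.im ^ 2 + um ^ 2 - 2 * K * x.im * um) * (x.im + y.im) ^ 2
        = 0 := by
      rw [key]; linear_combination (x.im ^ 2) * hcon
    have h2 : ((x.im + y.im):ℝ) ^ 2 ≠ 0 := by positivity
    have e1 : (x.re - pm) ^ 2 + x.im ^ 2 + um ^ 2 = 2 * K * x.im * um := by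
      rcases mul_eq_zero.mp h4 with h | h
      · linarith
      · exact absurd h h2
    have hcd : Real.cosh (dist x (UpperHalfPlane.mk ⟨pm, um⟩ humpos)) = K := by
      rw [UpperHalfPlane.cosh_dist']
      show ((x.re - pm) ^ 2 + x.im ^ 2 + um ^ 2) / (2 * x.im * um) = K
      rw [e1]
      field_simp
    exact eq_of_cosh_eq dist_nonneg (by positivity) (hcd.trans hKdef)
  · have key : ((pm - y.re) ^ 2 + um ^ 2 + y.im ^ 2 - 2 * K * um * y.im) * (x.im + y.im) ^ 2
        = y.im ^ 2 * ((x.re - y.re) ^ 2 + x.im ^ 2 + y.im ^ 2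
            - (2 * K ^ 2 - 1) * (2 * x.im * y.im)) := by
      rw [humdef, hpmdef]
      field_simp
      ring
    have h4 : ((pm - y.re) ^ 2 + um ^ 2 + y.im ^ 2 - 2 * K * um * y.im) * (x.im + y.im) ^ 2
        = 0 := by
      rw [key]; linear_combination (y.im ^ 2) * hcon
    have h2 : ((x.im + y.im):ℝ) ^ 2 ≠ 0 := by positivity
    have e2 : (pm - y.re) ^ 2 + um ^ 2 + y.im ^ 2 = 2 * K * um * y.im := by
      rcases mul_eq_zero.mp h4 with h | h
      · linarith
      · exact absurd h h2
    have hcd : Real.cosh (dist (UpperHalfPlane.mk ⟨pm, um⟩ humpos) y) = K := by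
      rw [UpperHalfPlane.cosh_dist']
      show ((pm - y.re) ^ 2 + um ^ 2 + y.im ^ 2) / (2 * um * y.im) = K
      rw [e2]
      field_simp
    exact eq_of_cosh_eq dist_nonneg (by positivity) (hcd.trans hKdef)

/-- if a sequence of convex bodies `C m` converges in the
Hausdorff distance to a nondegenerate geodesic segment `s`, then the Fillmore
widths of the `C m` stay (eventually, uniformly in the ideal point) bounded
away from zero. -/
theorem stmt_10 (x y : UpperHalfPlane) (hxy : x ≠ y)
    (s : Set UpperHalfPlane)
    (hs : s = {z : UpperHalfPlane | dist x z + dist z y = dist x y})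
    (C : ℕ → Set UpperHalfPlane)
    (hCcp : ∀ m, IsCompact (C m)) (hCint : ∀ m, (interior (C m)).Nonempty)
    (hCcv : ∀ m, HypConvex (C m))
    (hconv : Filter.Tendsto (fun m => Metric.hausdorffDist (C m) s)
      Filter.atTop (nhds 0)) :
    ∃ c > 0, ∃ M : ℕ, ∀ m ≥ M, ∀ i : Option ℝ, c ≤ fillmoreWidth (C m) i := by
  have hd : 0 < dist x y := dist_pos.mpr hxy
  set K : ℝ := Real.cosh (dist x y / 2) with hKdef
  have hK1 : 1 < K := Real.one_lt_cosh.mpr (by positivity)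
  have hK0 : 0 < K := lt_trans one_pos hK1
  have hlogK : 0 < Real.log K := Real.log_pos hK1
  obtain ⟨m0, hm1, hm2⟩ := exists_midpoint x y
  -- membership in s
  have hx_s : x ∈ s := by rw [hs]; simp [dist_self]
  have hy_s : y ∈ s := by rw [hs]; simp [dist_self]
  have hm_s : m0 ∈ s := by rw [hs]; simp only [Set.mem_setOf_eq]; linarith
  -- s is bounded and nonempty
  have hs_ne : s.Nonempty := ⟨x, hx_s⟩
  have hs_bdd : Bornology.IsBounded s := by
    apply (Metric.isBounded_closedBall (x := x) (r := dist x y)).subset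
    intro z hz
    rw [hs] at hz
    simp only [Set.mem_setOf_eq] at hz
    have h1 : dist x z ≤ dist x y := by
      have := dist_nonneg (x := z) (y := y)
      linarith
    simpa [Metric.mem_closedBall, dist_comm] using h1
  set ε : ℝ := Real.log K / 4 with hεdef
  have hε : 0 < ε := by positivity
  have hev : ∀ᶠ n in Filter.atTop, Metric.hausdorffDist (C n) s < ε :=
    hconv.eventually_lt_const hε
  obtain ⟨M, hM⟩ := Filter.eventually_atTop.mp hev
  refine ⟨Real.log K / 2, by positivity, M, ?_⟩
  intro n hn i
  have hCn_ne : (C n).Nonempty := ((hCint n).mono interior_subset)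
  have hfin : EMetric.hausdorffEdist s (C n) ≠ ⊤ :=
    Metric.hausdorffEdist_ne_top_of_nonempty_of_bounded hs_ne hCn_ne hs_bdd
      (hCcp n).isBounded
  have hHD : Metric.hausdorffDist s (C n) < ε := by
    rw [Metric.hausdorffDist_comm]; exact hM n hn
  obtain ⟨wx, hwx_mem, hwx⟩ := Metric.exists_dist_lt_of_hausdorffDist_lt hx_s hHD hfin
  obtain ⟨wy, hwy_mem, hwy⟩ := Metric.exists_dist_lt_of_hausdorffDist_lt hy_s hHD hfin
  obtain ⟨wm, hwm_mem, hwm⟩ := Metric.exists_dist_lt_of_hausdorffDist_lt hm_s hHD hfin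
  -- the three coordinate equations
  have hcxm : Real.cosh (dist x m0) = K := by rw [hm1]
  have hcmy : Real.cosh (dist m0 y) = K := by rw [hm2]
  have hcxy : Real.cosh (dist x y) = 2 * K ^ 2 - 1 := by
    have h2 : dist x y = 2 * (dist x y / 2) := by ring
    rw [h2, Real.cosh_two_mul, Real.sinh_sq, hKdef]
    ring
  have e1 : (Pco i x - Pco i m0) ^ 2 + beta i x ^ 2 + beta i m0 ^ 2
      = 2 * K * beta i x * beta i m0 := by
    have h := coords_eq i x m0
    rw [hcxm] at h
    linarith [h]
  have e2 : (Pco i m0 - Pco i y) ^ 2 + beta i m0 ^ 2 + beta i y ^ 2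
      = 2 * K * beta i m0 * beta i y := by
    have h := coords_eq i m0 y
    rw [hcmy] at h
    linarith [h]
  have e3 : (Pco i x - Pco i y) ^ 2 + beta i x ^ 2 + beta i y ^ 2
      = 2 * (2 * K ^ 2 - 1) * beta i x * beta i y := by
    have h := coords_eq i x y
    rw [hcxy] at h
    linarith [h]
  have hkey := key_lemma K (beta i x) (beta i m0) (beta i y)
      (Pco i x) (Pco i m0) (Pco i y) hK1 (beta_pos i x) (beta_pos i m0) (beta_pos i y)
      e1 e2 e3
  -- In both cases, there is an endpoint e with log beta m0 - log beta e ≥ log K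
  have hmain : ∃ w1 ∈ C n, ∃ w2 ∈ C n,
      Real.log K - 2 * ε ≤ Real.log (beta i w1) - Real.log (beta i w2) := by
    rcases hkey with hcase | hcase
    · refine ⟨wm, hwm_mem, wx, hwx_mem, ?_⟩
      have hgap : Real.log K + Real.log (beta i x) ≤ Real.log (beta i m0) := by
        have := Real.log_le_log (mul_pos hK0 (beta_pos i x)) hcase
        rwa [Real.log_mul hK0.ne' (beta_pos i x).ne'] at this
      have l1 : |Real.log (beta i m0) - Real.log (beta i wm)| ≤ dist m0 wm :=
        abs_log_beta_sub_le i m0 wm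
      have l2 : |Real.log (beta i x) - Real.log (beta i wx)| ≤ dist x wx :=
        abs_log_beta_sub_le i x wx
      have a1 := abs_le.mp l1
      have a2 := abs_le.mp l2
      have := a1.1
      have := a2.2
      -- log β wm ≥ log β m0 - ε, log β wx ≤ log β x + ε
      have b1 : Real.log (beta i m0) - ε ≤ Real.log (beta i wm) := by
        have := a1.2; linarith
      have b2 : Real.log (beta i wx) ≤ Real.log (beta i x) + ε := by
        have := a2.1; linarith
      linarith
    · refine ⟨wm, hwm_mem, wy, hwy_mem, ?_⟩
      have hgap : Real.log K + Real.log (beta i y) ≤ Real.log (beta i m0) := by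
        have := Real.log_le_log (mul_pos hK0 (beta_pos i y)) hcase
        rwa [Real.log_mul hK0.ne' (beta_pos i y).ne'] at this
      have l1 : |Real.log (beta i m0) - Real.log (beta i wm)| ≤ dist m0 wm :=
        abs_log_beta_sub_le i m0 wm
      have l2 : |Real.log (beta i y) - Real.log (beta i wy)| ≤ dist y wy :=
        abs_log_beta_sub_le i y wy
      have a1 := abs_le.mp l1
      have a2 := abs_le.mp l2
      have b1 : Real.log (beta i m0) - ε ≤ Real.log (beta i wm) := by
        have := a1.2; linarith
      have b2 : Real.log (beta i wy) ≤ Real.log (beta i y) + ε := by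
        have := a2.1; linarith
      linarith
  obtain ⟨w1, hw1, w2, hw2, hgap⟩ := hmain
  -- compare with sSup and sInf of the image
  have hSc : IsCompact (beta i '' C n) := (hCcp n).image (continuous_beta i)
  have hSne : (beta i '' C n).Nonempty := hCn_ne.image _
  have hsup_mem : sSup (beta i '' C n) ∈ beta i '' C n := hSc.sSup_mem hSne
  have hinf_mem : sInf (beta i '' C n) ∈ beta i '' C n := hSc.sInf_mem hSne
  have hinf_pos : 0 < sInf (beta i '' C n) := by
    obtain ⟨z, _, hz⟩ := hinf_mem
    rw [← hz]; exact beta_pos i z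
  have hle1 : beta i w1 ≤ sSup (beta i '' C n) :=
    le_csSup hSc.bddAbove ⟨w1, hw1, rfl⟩
  have hle2 : sInf (beta i '' C n) ≤ beta i w2 :=
    csInf_le hSc.bddBelow ⟨w2, hw2, rfl⟩
  have hlog1 : Real.log (beta i w1) ≤ Real.log (sSup (beta i '' C n)) :=
    Real.log_le_log (beta_pos i w1) hle1
  have hlog2 : Real.log (sInf (beta i '' C n)) ≤ Real.log (beta i w2) :=
    Real.log_le_log hinf_pos hle2
  have : Real.log K - 2 * ε = Real.log K / 2 := by rw [hεdef]; ring
  rw [fillmoreWidth]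
  linarith
end

section
/- Let K ⊆ H² be a diametrically complete set with Metric.diam K = D > 0. Then (1) K is compact and hyperbolically convex, and (2) for every boundary point z ∈ frontier K there exists y ∈ frontier K with dist y z = D. -/
open UpperHalfPlane

/-- A set is diametrically complete if adjoining any point outside of it
strictly increases its diameter. -/
def DiamComplete (K : Set UpperHalfPlane) : Prop :=
  ∀ y ∉ K, Metric.diam K < Metric.diam (K ∪ {y})

open UpperHalfPlane Real Matrix
open scoped MatrixGroups

noncomputable section

def sl2 (a b c d : ℝ) (h : a * d - b * c = 1) : SL(2, ℝ) :=
  ⟨!![a, b; c, d], by rw [Matrix.det_fin_two_of]; linarith⟩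

lemma sl2_smul_coe (a b c d : ℝ) (h : a * d - b * c = 1) (w : ℍ) :
    ((sl2 a b c d h • w : ℍ) : ℂ) = ((a : ℂ) * w + b) / ((c : ℂ) * w + d) := by
  rw [UpperHalfPlane.specialLinearGroup_apply]
  simp [sl2]

lemma exists_isometryEquiv_re_eq_zero (x y : ℍ) :
    ∃ e : ℍ ≃ᵢ ℍ, (e x).re = 0 ∧ (e y).re = 0 := by
  by_cases hxy : x.re = y.re
  · refine ⟨IsometryEquiv.constSMul (sl2 1 (-x.re) 0 1 (by ring)), ?_, ?_⟩
    · show ((sl2 1 (-x.re) 0 1 (by ring) • x : ℍ)).re = 0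
      rw [← UpperHalfPlane.coe_re, sl2_smul_coe]
      simp
    · show ((sl2 1 (-x.re) 0 1 (by ring) • y : ℍ)).re = 0
      rw [← UpperHalfPlane.coe_re, sl2_smul_coe]
      simp [← hxy]
  · set c : ℝ := (x.re ^ 2 + x.im ^ 2 - y.re ^ 2 - y.im ^ 2) / (2 * (x.re - y.re)) with hcdef
    have hsub : x.re - y.re ≠ 0 := sub_ne_zero.mpr hxy
    have hc : (x.re - c) ^ 2 + x.im ^ 2 = (y.re - c) ^ 2 + y.im ^ 2 := by
      have key : c * (2 * (x.re - y.re)) = x.re ^ 2 + x.im ^ 2 - y.re ^ 2 - y.im ^ 2 :=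
        div_mul_cancel₀ _ (mul_ne_zero two_ne_zero hsub)
      linear_combination (-1 : ℝ) * key
    have hxpos : (0:ℝ) < (x.re - c) ^ 2 + x.im ^ 2 :=
      lt_of_lt_of_le (by positivity) (le_add_of_nonneg_left (sq_nonneg _))
    set r : ℝ := Real.sqrt ((x.re - c) ^ 2 + x.im ^ 2) with hrdef
    have hr : 0 < r := Real.sqrt_pos.mpr hxpos
    have hr2x : (x.re - c) ^ 2 + x.im ^ 2 = r ^ 2 := (Real.sq_sqrt hxpos.le).symm
    have hr2y : (y.re - c) ^ 2 + y.im ^ 2 = r ^ 2 := hc.symm.trans hr2x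
    set s : ℝ := (Real.sqrt (2 * r))⁻¹ with hsdef
    have hs : 0 < s := inv_pos.mpr (Real.sqrt_pos.mpr (by linarith))
    have hs2 : s ^ 2 * (2 * r) = 1 := by
      rw [hsdef, inv_pow, Real.sq_sqrt (by linarith : (0:ℝ) ≤ 2 * r)]
      field_simp
    have hdet : s * (-(s * (c - r))) - -(s * (c + r)) * s = 1 := by nlinarith [hs2]
    set g : SL(2, ℝ) := sl2 s (-(s * (c + r))) s (-(s * (c - r))) hdet with hgdef
    have hcoe : ∀ w : ℍ, ((g • w : ℍ) : ℂ) = ((w : ℂ) - (c + r)) / ((w : ℂ) - (c - r)) := by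
      intro w
      rw [hgdef, sl2_smul_coe]
      have hs0 : (s : ℂ) ≠ 0 := by exact_mod_cast hs.ne'
      rw [← mul_div_mul_left ((w : ℂ) - (c + r)) ((w : ℂ) - (c - r)) hs0]
      congr 1 <;> push_cast <;> ring
    have hre : ∀ w : ℍ, (w.re - c) ^ 2 + w.im ^ 2 = r ^ 2 → (g • w : ℍ).re = 0 := by
      intro w hw
      rw [← UpperHalfPlane.coe_re, hcoe w, Complex.div_re]
      have h1 : ((w : ℂ) - ((c : ℂ) + r)).re = w.re - (c + r) := by
        simp [Complex.sub_re]
      have h2 : ((w : ℂ) - ((c : ℂ) - r)).re = w.re - (c - r) := by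
        simp [Complex.sub_re]
      have h3 : ((w : ℂ) - ((c : ℂ) + r)).im = w.im := by simp
      have h4 : ((w : ℂ) - ((c : ℂ) - r)).im = w.im := by simp
      rw [← add_div, h1, h2, h3, h4]
      have : w.re - (c + r) = w.re - (c + r) := rfl
      have hnum : (w.re - (c + r)) * (w.re - (c - r)) + w.im * w.im = 0 := by nlinarith [hw]
      rw [hnum, zero_div]
    exact ⟨IsometryEquiv.constSMul g, hre x hr2x, hre y hr2y⟩

lemma re_eq_of_dist_eq_log {w v : ℍ} (h : dist w v = dist (Real.log w.im) (Real.log v.im)) :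
    w.re = v.re := by
  have hiw := w.im_pos
  have hiv := v.im_pos
  have h2 : Real.cosh (dist (Real.log w.im) (Real.log v.im)) =
      (w.im ^ 2 + v.im ^ 2) / (2 * w.im * v.im) := by
    rw [Real.dist_eq, ← Real.log_div w.im_ne_zero v.im_ne_zero, Real.cosh_abs,
      Real.cosh_log (div_pos hiw hiv)]
    field_simp
  have h3 := UpperHalfPlane.cosh_dist' w v
  rw [h, h2] at h3
  have h4 : (w.re - v.re) ^ 2 = 0 := by
    have hne : (2 * w.im * v.im) ≠ 0 := by positivity
    field_simp at h3
    nlinarith [h3]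
  have := pow_eq_zero_iff (n := 2) (by norm_num) |>.mp h4
  linarith [sub_eq_zero.mp this]

lemma between_of_re_eq_zero {x y z : ℍ} (hx : x.re = 0) (hy : y.re = 0)
    (h : dist x z + dist z y = dist x y) :
    z.re = 0 ∧ min x.im y.im ≤ z.im ∧ z.im ≤ max x.im y.im := by
  set a := Real.log x.im with ha
  set b := Real.log y.im with hb
  set c := Real.log z.im with hc
  have h1 : dist a c ≤ dist x z := UpperHalfPlane.dist_log_im_le x z
  have h2 : dist c b ≤ dist z y := UpperHalfPlane.dist_log_im_le z y
  have h3 : dist x y = dist a b := UpperHalfPlane.dist_of_re_eq (hx.trans hy.symm)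
  have h4 : dist a b ≤ dist a c + dist c b := dist_triangle a c b
  have e1 : dist x z = dist a c := by linarith
  have e3 : dist a c + dist c b = dist a b := by linarith
  have hzre : z.re = 0 := (re_eq_of_dist_eq_log e1).symm.trans hx
  rw [Real.dist_eq, Real.dist_eq, Real.dist_eq] at e3
  have hminab : min a b ≤ c := by
    by_contra hcon
    push_neg at hcon
    have hca : c < a := lt_of_lt_of_le hcon (min_le_left a b)
    have hcb : c < b := lt_of_lt_of_le hcon (min_le_right a b)
    rw [abs_of_pos (by linarith), abs_of_neg (by linarith)] at e3
    rcases abs_cases (a - b) with ⟨h5, _⟩ | ⟨h5, _⟩ <;> linarith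
  have hmaxab : c ≤ max a b := by
    by_contra hcon
    push_neg at hcon
    have hca : a < c := lt_of_le_of_lt (le_max_left a b) hcon
    have hcb : b < c := lt_of_le_of_lt (le_max_right a b) hcon
    rw [abs_of_neg (by linarith), abs_of_pos (by linarith)] at e3
    rcases abs_cases (a - b) with ⟨h5, _⟩ | ⟨h5, _⟩ <;> linarith
  refine ⟨hzre, ?_, ?_⟩
  · have := Real.exp_le_exp.mpr hminab
    rwa [Real.exp_monotone.map_min, ha, hb, hc, Real.exp_log x.im_pos, Real.exp_log y.im_pos,
      Real.exp_log z.im_pos] at this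
  · have := Real.exp_le_exp.mpr hmaxab
    rwa [Real.exp_monotone.map_max, ha, hb, hc, Real.exp_log x.im_pos, Real.exp_log y.im_pos,
      Real.exp_log z.im_pos] at this

lemma algC' {A C va vb u : ℝ} (hA : 0 ≤ A) (hC : 0 < C) (hva : 0 < va) (hvb : 0 < vb)
    (hu : 0 < u) (hab : va ≤ vb) (h1 : va ≤ u) (h2 : u ≤ vb) :
    (A + u ^ 2) / (C * u) ≤ max ((A + va ^ 2) / (C * va)) ((A + vb ^ 2) / (C * vb)) := by
  rcases le_or_gt A (u * vb) with hcase | hcase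
  · refine le_max_of_le_right ?_
    rw [div_le_div_iff₀ (by positivity) (by positivity)]
    nlinarith [mul_nonneg (mul_nonneg hC.le (sub_nonneg.2 h2)) (sub_nonneg.2 hcase)]
  · refine le_max_of_le_left ?_
    rw [div_le_div_iff₀ (by positivity) (by positivity)]
    have hva' : u * va ≤ u * vb := by nlinarith
    nlinarith [mul_nonneg (mul_nonneg hC.le (sub_nonneg.2 h1))
      (by nlinarith : (0:ℝ) ≤ A - u * va)]

lemma algC {A C va vb u : ℝ} (hA : 0 ≤ A) (hC : 0 < C) (hva : 0 < va) (hvb : 0 < vb)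
    (hu : 0 < u) (h1 : min va vb ≤ u) (h2 : u ≤ max va vb) :
    (A + u ^ 2) / (C * u) ≤ max ((A + va ^ 2) / (C * va)) ((A + vb ^ 2) / (C * vb)) := by
  rcases le_total va vb with hab | hab
  · rw [min_eq_left hab] at h1; rw [max_eq_right hab] at h2
    exact algC' hA hC hva hvb hu hab h1 h2
  · rw [min_eq_right hab] at h1; rw [max_eq_left hab] at h2
    rw [max_comm]
    exact algC' hA hC hvb hva hu hab h1 h2

lemma dist_le_max_of_between (x y z k : ℍ) (h : dist x z + dist z y = dist x y) :
    dist k z ≤ max (dist k x) (dist k y) := by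
  obtain ⟨e, hex, hey⟩ := exists_isometryEquiv_re_eq_zero x y
  rw [← e.dist_eq k z, ← e.dist_eq k x, ← e.dist_eq k y]
  rw [← e.dist_eq x z, ← e.dist_eq z y, ← e.dist_eq x y] at h
  obtain ⟨hz0, hmin, hmax⟩ := between_of_re_eq_zero hex hey h
  set K := e k
  set X := e x
  set Y := e y
  set Z := e z
  have hKi := K.im_pos
  have hXi := X.im_pos
  have hYi := Y.im_pos
  have hZi := Z.im_pos
  have key : Real.cosh (dist K Z) ≤ max (Real.cosh (dist K X)) (Real.cosh (dist K Y)) := by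
    rw [UpperHalfPlane.cosh_dist', UpperHalfPlane.cosh_dist', UpperHalfPlane.cosh_dist',
      hz0, hex, hey]
    have H := algC (A := K.re ^ 2 + K.im ^ 2) (C := 2 * K.im) (va := X.im) (vb := Y.im)
      (u := Z.im) (by positivity) (by positivity) hXi hYi hZi hmin hmax
    have e1 : ((K.re - 0) ^ 2 + K.im ^ 2 + Z.im ^ 2) / (2 * K.im * Z.im) =
        (K.re ^ 2 + K.im ^ 2 + Z.im ^ 2) / (2 * K.im * Z.im) := by ring_nf
    have e2 : ((K.re - 0) ^ 2 + K.im ^ 2 + X.im ^ 2) / (2 * K.im * X.im) =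
        (K.re ^ 2 + K.im ^ 2 + X.im ^ 2) / (2 * K.im * X.im) := by ring_nf
    have e3 : ((K.re - 0) ^ 2 + K.im ^ 2 + Y.im ^ 2) / (2 * K.im * Y.im) =
        (K.re ^ 2 + K.im ^ 2 + Y.im ^ 2) / (2 * K.im * Y.im) := by ring_nf
    rw [e1, e2, e3]
    convert H using 3 <;> ring
  rcases le_max_iff.mp key with hc | hc
  · refine le_max_of_le_left ?_
    have := Real.cosh_le_cosh.mp hc
    rwa [abs_of_nonneg dist_nonneg, abs_of_nonneg dist_nonneg] at this
  · refine le_max_of_le_right ?_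
    have := Real.cosh_le_cosh.mp hc
    rwa [abs_of_nonneg dist_nonneg, abs_of_nonneg dist_nonneg] at this

lemma exists_extension_s15 (z y : ℍ) (hne : z ≠ y) (ε : ℝ) (hε : 0 < ε) :
    ∃ y' : ℍ, dist y y' = ε ∧ dist z y' = dist z y + ε := by
  obtain ⟨e, hez, hey⟩ := exists_isometryEquiv_re_eq_zero z y
  set a := Real.log (e z).im with ha
  set b := Real.log (e y).im with hb
  have hab : a ≠ b := by
    intro hq
    apply hne
    apply e.injective
    have him : (e z).im = (e y).im := by
      rw [← Real.exp_log (e z).im_pos, ← Real.exp_log (e y).im_pos, ← ha, ← hb, hq]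
    exact UpperHalfPlane.ext' (hez.trans hey.symm) him
  set c := if a < b then b + ε else b - ε with hcdef
  set y'' : ℍ := UpperHalfPlane.mk ⟨0, Real.exp c⟩ (Real.exp_pos c) with hy''
  have hy''re : y''.re = 0 := rfl
  have hy''im : y''.im = Real.exp c := rfl
  have hdd : ∀ w : ℍ, w.re = 0 → dist w y'' = dist (Real.log w.im) c := by
    intro w hw
    rw [UpperHalfPlane.dist_of_re_eq (hw.trans hy''re.symm), hy''im, Real.log_exp]
  have hdy : dist (e y) y'' = dist b c := hdd (e y) hey
  have hdz : dist (e z) y'' = dist a c := hdd (e z) hez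
  have hdzy : dist (e z) (e y) = dist a b :=
    UpperHalfPlane.dist_of_re_eq (hez.trans hey.symm)
  refine ⟨e.symm y'', ?_, ?_⟩
  · rw [← e.dist_eq y (e.symm y''), e.apply_symm_apply, hdy, Real.dist_eq, hcdef]
    split_ifs with hlt
    · rw [abs_of_nonpos (by linarith)]; ring
    · rw [abs_of_nonneg (by linarith)]; ring
  · rw [← e.dist_eq z (e.symm y''), e.apply_symm_apply, hdz, ← e.dist_eq z y, hdzy,
      Real.dist_eq, Real.dist_eq, hcdef]
    rcases lt_or_gt_of_ne hab with hlt | hgt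
    · rw [if_pos hlt, abs_of_nonpos (by linarith), abs_of_nonpos (by linarith)]; ring
    · rw [if_neg (by linarith), abs_of_nonneg (by linarith), abs_of_nonneg (by linarith)]; ring

end

/-- a diametrically complete set `K ⊆ H²` of diameter `D > 0` is
compact and hyperbolically convex, and every boundary point of `K` is at
distance `D` from some (other) boundary point. -/
theorem stmt_15 (K : Set UpperHalfPlane) (hKne : K.Nonempty)
    (hKbd : Bornology.IsBounded K) (hcomp : DiamComplete K)
    (D : ℝ) (hD : 0 < D) (hdiam : Metric.diam K = D) :
    IsCompact K ∧ HypConvex K ∧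
      ∀ z ∈ frontier K, ∃ y ∈ frontier K, dist y z = D := by

  set S : Set ℍ := {w : ℍ | ∀ k ∈ K, dist w k ≤ D} with hSdef
  have hKS : K ⊆ S := fun w hw k hk => hdiam ▸ Metric.dist_le_diam_of_mem hKbd hw hk
  have hSK : S ⊆ K := by
    intro w hw
    by_contra hwK
    have hlt := hcomp w hwK
    have hle : Metric.diam (K ∪ {w}) ≤ D := by
      refine Metric.diam_le_of_forall_dist_le hD.le ?_
      rintro p (hp | rfl) q (hq | rfl)
      · exact hdiam ▸ Metric.dist_le_diam_of_mem hKbd hp hq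
      · rw [dist_comm]; exact hw p hp
      · exact hw q hq
      · simp [hD.le]
    rw [hdiam] at hlt
    exact absurd (hlt.trans_le hle) (lt_irrefl D)
  have hKeq : K = S := Set.Subset.antisymm hKS hSK
  have hSclosed : IsClosed S := by
    have : S = ⋂ k ∈ K, Metric.closedBall k D := by
      ext w
      simp [hSdef, Metric.mem_closedBall]
    rw [this]
    exact isClosed_biInter fun k _ => Metric.isClosed_closedBall
  have hKcl : IsClosed K := hKeq ▸ hSclosed
  have hKcompact : IsCompact K := Metric.isCompact_of_isClosed_isBounded hKcl hKbd
  refine ⟨hKcompact, ?_, ?_⟩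
  · intro x hx y hy z hz
    rw [hKeq]
    intro k hk
    calc dist z k = dist k z := dist_comm z k
      _ ≤ max (dist k x) (dist k y) := dist_le_max_of_between x y z k hz
      _ ≤ D := max_le (hdiam ▸ Metric.dist_le_diam_of_mem hKbd hk hx)
          (hdiam ▸ Metric.dist_le_diam_of_mem hKbd hk hy)
  · intro z hz
    have hzK : z ∈ K := hKcl.closure_eq ▸ frontier_subset_closure hz
    have hzint : z ∉ interior K := by
      rw [hKcl.frontier_eq] at hz
      exact hz.2
    obtain ⟨y, hyK, hymax⟩ := hKcompact.exists_isMaxOn hKne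
      ((continuous_id.dist continuous_const).continuousOn (f := fun k : ℍ => dist k z))
    have hyD : dist y z = D := by
      refine le_antisymm (hdiam ▸ Metric.dist_le_diam_of_mem hKbd hyK hzK) ?_
      by_contra hlt
      push_neg at hlt
      apply hzint
      refine mem_interior.mpr ⟨Metric.ball z (D - dist y z), ?_, Metric.isOpen_ball,
        Metric.mem_ball_self (by linarith)⟩
      intro w hw
      rw [hKeq]
      intro k hk
      have h1 : dist w z < D - dist y z := Metric.mem_ball.mp hw
      have h2 : dist k z ≤ dist y z := hymax hk
      calc dist w k ≤ dist w z + dist z k := dist_triangle w z k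
        _ ≤ (D - dist y z) + dist y z := by rw [dist_comm z k]; exact add_le_add h1.le h2
        _ = D := by ring
    have hne : z ≠ y := by
      intro hzy
      rw [hzy, dist_self] at hyD
      exact hD.ne hyD
    refine ⟨y, ?_, hyD⟩
    rw [hKcl.frontier_eq]
    refine ⟨hyK, fun hyint => ?_⟩
    obtain ⟨ε, hε, hball⟩ := Metric.mem_nhds_iff.mp (mem_interior_iff_mem_nhds.mp hyint)
    obtain ⟨y', h1, h2⟩ := exists_extension_s15 z y hne (ε / 2) (by linarith)
    have hy'K : y' ∈ K := hball (by rw [Metric.mem_ball, dist_comm, h1]; linarith)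
    have hle : dist z y' ≤ D := hdiam ▸ Metric.dist_le_diam_of_mem hKbd hzK hy'K
    rw [h2, dist_comm z y, hyD] at hle
    linarith
end

section
/- Let K ⊆ H² be a diametrically complete set with Metric.diam K = D > 0. Then R(K) + r(K) = D, where R(K) is the circumradius and r(K) the inradius of K. Furthermore, K has a unique inscribed ball whose center is the circumcenter: there is exactly one point z with Metric.closedBall z (r(K)) ⊆ K, and this z also satisfies K ⊆ Metric.closedBall z (R(K)). -/
open UpperHalfPlane
open Metric Real Set

lemma euclid_far (c c' : ℂ) {R : ℝ} (hR : 0 ≤ R) :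
    ∃ p : ℂ, dist p c = R ∧ dist p c' = dist c c' + R := by
  rcases eq_or_ne c c' with rfl | h
  · refine ⟨c + R, ?_, ?_⟩ <;>
      simp [dist_eq_norm, Complex.norm_real, abs_of_nonneg hR]
  · have hd : 0 < dist c c' := dist_pos.2 h
    have hnorm : ‖c - c'‖ = dist c c' := (dist_eq_norm c c').symm
    refine ⟨c + (↑(R / dist c c') : ℂ) * (c - c'), ?_, ?_⟩
    · rw [dist_eq_norm, add_sub_cancel_left, norm_mul, Complex.norm_real,
        Real.norm_eq_abs, abs_of_nonneg (by positivity), hnorm]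
      field_simp
    · have hrw : c + (↑(R / dist c c') : ℂ) * (c - c') - c' =
          (↑(1 + R / dist c c') : ℂ) * (c - c') := by push_cast; ring
      rw [dist_eq_norm, hrw, norm_mul, Complex.norm_real, Real.norm_eq_abs,
        abs_of_nonneg (by positivity), hnorm]
      field_simp

lemma dist_center_center (x w : ℍ) (ρ : ℝ) :
    dist ((w.center ρ : ℍ) : ℂ) ((x.center (dist x w + ρ) : ℍ) : ℂ) =
      |x.im * Real.sinh (dist x w + ρ) - w.im * Real.sinh ρ| := by
  have key : (x.re - w.re) ^ 2 =
      2 * x.im * w.im * Real.cosh (dist x w) - x.im ^ 2 - w.im ^ 2 := by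
    have h := cosh_dist' x w
    have h2 : (0:ℝ) < 2 * x.im * w.im := by positivity
    field_simp at h
    nlinarith [h]
  have hsq : dist ((w.center ρ : ℍ) : ℂ) ((x.center (dist x w + ρ) : ℍ) : ℂ) ^ 2 =
      (x.im * Real.sinh (dist x w + ρ) - w.im * Real.sinh ρ) ^ 2 := by
    rw [Complex.dist_eq_re_im, Real.sq_sqrt (by positivity)]
    simp only [coe_re, coe_im, center_re, center_im]
    rw [Real.cosh_add, Real.sinh_add]
    have i1 : Real.cosh (dist x w) ^ 2 - Real.sinh (dist x w) ^ 2 = 1 :=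
      Real.cosh_sq_sub_sinh_sq (dist x w)
    have i2 : Real.cosh ρ ^ 2 - Real.sinh ρ ^ 2 = 1 := Real.cosh_sq_sub_sinh_sq ρ
    linear_combination key + (x.im ^ 2 * (Real.cosh ρ ^ 2 - Real.sinh ρ ^ 2)) * i1 +
      (x.im ^ 2 + w.im ^ 2 - 2 * x.im * w.im * Real.cosh (dist x w)) * i2
  have h := congrArg Real.sqrt hsq
  rwa [Real.sqrt_sq dist_nonneg, Real.sqrt_sq_eq_abs] at h

lemma hyp_ext (x w : ℍ) {ρ : ℝ} (hρ : 0 ≤ ρ) :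
    ∃ p : ℍ, dist p w = ρ ∧ dist x w + ρ ≤ dist x p := by
  have hRe0 : 0 ≤ w.im * Real.sinh ρ :=
    mul_nonneg w.im_pos.le (Real.sinh_nonneg_iff.2 hρ)
  obtain ⟨pC, hp1, hp2⟩ := euclid_far ((w.center ρ : ℍ) : ℂ)
    ((x.center (dist x w + ρ) : ℍ) : ℂ) hRe0
  have hmem : pC ∈ Metric.sphere ((w.center ρ : ℍ) : ℂ) (w.im * Real.sinh ρ) := hp1
  rw [← image_coe_sphere w ρ] at hmem
  obtain ⟨p, hpmem, rfl⟩ := hmem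
  refine ⟨p, hpmem, ?_⟩
  have hfar : x.im * Real.sinh (dist x w + ρ) ≤
      dist ((p : ℍ) : ℂ) ((x.center (dist x w + ρ) : ℍ) : ℂ) := by
    rw [hp2, dist_center_center x w ρ]
    have h1 := le_abs_self (x.im * Real.sinh (dist x w + ρ) - w.im * Real.sinh ρ)
    linarith
  by_contra hlt
  push_neg at hlt
  rw [dist_comm] at hlt
  exact absurd hfar (not_le.2 (dist_lt_iff_dist_coe_center_lt.1 hlt))

/-- The circumradius of a set: the least radius of a closed ball containing it. -/
noncomputable def circumradius (K : Set UpperHalfPlane) : ℝ :=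
  sInf {r : ℝ | 0 ≤ r ∧ ∃ z : UpperHalfPlane, K ⊆ Metric.closedBall z r}

/-- The inradius of a set: the greatest radius of a closed ball contained in it. -/
noncomputable def inradius (K : Set UpperHalfPlane) : ℝ :=
  sSup {r : ℝ | 0 ≤ r ∧ ∃ z : UpperHalfPlane, Metric.closedBall z r ⊆ K}

set_option maxHeartbeats 2000000 in
/-- for a diametrically complete set `K ⊆ H²` of diameter
`D > 0`, the circumradius and inradius satisfy `R(K) + r(K) = D`; moreover `K`
has a unique inscribed ball, whose center is the circumcenter. -/
theorem stmt_16 (K : Set UpperHalfPlane) (hKne : K.Nonempty)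
    (hKbd : Bornology.IsBounded K) (hcomp : DiamComplete K)
    (D : ℝ) (hD : 0 < D) (hdiam : Metric.diam K = D) :
    circumradius K + inradius K = D ∧
      (∃! z : UpperHalfPlane, Metric.closedBall z (inradius K) ⊆ K) ∧
      (∀ z : UpperHalfPlane, Metric.closedBall z (inradius K) ⊆ K →
        K ⊆ Metric.closedBall z (circumradius K)) := by
  obtain ⟨x₀, hx₀⟩ := hKne
  have hdistD : ∀ x ∈ K, ∀ y ∈ K, dist x y ≤ D := by
    intro x hx y hy
    calc dist x y ≤ Metric.diam K := Metric.dist_le_diam_of_mem hKbd hx hy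
      _ = D := hdiam
  have hchar : ∀ y : ℍ, y ∈ K ↔ ∀ x ∈ K, dist x y ≤ D := by
    intro y
    constructor
    · intro hy x hx; exact hdistD x hx y hy
    · intro h
      by_contra hy
      have h1 := hcomp y hy
      rw [hdiam] at h1
      have h2 : Metric.diam (K ∪ {y}) ≤ D := by
        apply Metric.diam_le_of_forall_dist_le hD.le
        rintro a (ha | ha) b (hb | hb)
        · exact hdistD a ha b hb
        · rw [Set.mem_singleton_iff] at hb; subst hb; exact h a ha
        · rw [Set.mem_singleton_iff] at ha; subst ha; rw [dist_comm]; exact h b hb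
        · rw [Set.mem_singleton_iff] at ha hb; subst ha; subst hb
          simpa using hD.le
      exact absurd h1 (not_lt.2 h2)
  set S := {r : ℝ | 0 ≤ r ∧ ∃ z : ℍ, K ⊆ Metric.closedBall z r} with hSdef
  set T := {r : ℝ | 0 ≤ r ∧ ∃ z : ℍ, Metric.closedBall z r ⊆ K} with hTdef
  have hDS : D ∈ S := ⟨hD.le, x₀, fun y hy => Metric.mem_closedBall.2 (hdistD y hy x₀ hx₀)⟩
  have hSbdd : BddBelow S := ⟨0, fun s hs => hs.1⟩
  have hSne : S.Nonempty := ⟨D, hDS⟩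
  set f : ℍ → ℝ := fun z => sSup ((fun x => dist x z) '' K) with hfdef
  have himgne : ∀ z : ℍ, ((fun x => dist x z) '' K).Nonempty :=
    fun z => (Set.nonempty_of_mem hx₀).image _
  have himgbdd : ∀ z : ℍ, BddAbove ((fun x => dist x z) '' K) := by
    intro z
    refine ⟨D + dist x₀ z, ?_⟩
    rintro _ ⟨x, hx, rfl⟩
    calc dist x z ≤ dist x x₀ + dist x₀ z := dist_triangle _ _ _
      _ ≤ D + dist x₀ z := by have := hdistD x hx x₀ hx₀; linarith
  have hfle : ∀ (z : ℍ) (c : ℝ), (∀ x ∈ K, dist x z ≤ c) → f z ≤ c := by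
    intro z c h
    exact csSup_le (himgne z) (by rintro _ ⟨x, hx, rfl⟩; exact h x hx)
  have hlef : ∀ (z : ℍ), ∀ x ∈ K, dist x z ≤ f z := fun z x hx =>
    le_csSup (himgbdd z) ⟨x, hx, rfl⟩
  have hlip : LipschitzWith 1 f := by
    apply LipschitzWith.of_le_add
    intro z z'
    apply hfle
    intro x hx
    calc dist x z ≤ dist x z' + dist z' z := dist_triangle _ _ _
      _ ≤ f z' + dist z z' := by
          rw [dist_comm z' z]; have := hlef z' x hx; linarith
  obtain ⟨z₀, hz₀mem, hz₀min⟩ := (isCompact_closedBall x₀ D).exists_isMinOn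
    ⟨x₀, Metric.mem_closedBall_self hD.le⟩ hlip.continuous.continuousOn
  have hfx₀ : f x₀ ≤ D := hfle x₀ D (fun x hx => hdistD x hx x₀ hx₀)
  have hfz₀x₀ : f z₀ ≤ f x₀ := hz₀min (Metric.mem_closedBall_self hD.le)
  have hfz₀D : f z₀ ≤ D := hfz₀x₀.trans hfx₀
  have hfz₀0 : 0 ≤ f z₀ := dist_nonneg.trans (hlef z₀ x₀ hx₀)
  have hfz₀S : f z₀ ∈ S := ⟨hfz₀0, z₀, fun x hx => hlef z₀ x hx⟩
  have hfz₀lb : ∀ s ∈ S, f z₀ ≤ s := by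
    rintro s ⟨hs0, z, hz⟩
    rcases le_or_gt s D with hsD | hsD
    · have hzmem : z ∈ Metric.closedBall x₀ D := by
        rw [Metric.mem_closedBall, dist_comm]
        exact (Metric.mem_closedBall.1 (hz hx₀)).trans hsD
      exact (hz₀min hzmem).trans (hfle z s (fun x hx => hz hx))
    · exact hfz₀D.trans hsD.le
  have hR : circumradius K = f z₀ :=
    le_antisymm (csInf_le hSbdd hfz₀S) (le_csInf hSne hfz₀lb)
  have hR0 : 0 ≤ circumradius K := by rw [hR]; exact hfz₀0
  have hRD : circumradius K ≤ D := by rw [hR]; exact hfz₀D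
  have hKz₀ : ∀ x ∈ K, dist x z₀ ≤ circumradius K := by
    intro x hx; rw [hR]; exact hlef z₀ x hx
  have hball : Metric.closedBall z₀ (D - circumradius K) ⊆ K := by
    intro y hy
    rw [Metric.mem_closedBall] at hy
    rw [hchar]
    intro x hx
    calc dist x y ≤ dist x z₀ + dist z₀ y := dist_triangle _ _ _
      _ ≤ circumradius K + (D - circumradius K) :=
          add_le_add (hKz₀ x hx) (by rwa [dist_comm] at hy)
      _ = D := by ring
  have hDRT : D - circumradius K ∈ T := ⟨by linarith, z₀, hball⟩
  have hKsub : ∀ (ρ : ℝ) (w : ℍ), 0 ≤ ρ → Metric.closedBall w ρ ⊆ K →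
      K ⊆ Metric.closedBall w (D - ρ) := by
    intro ρ w hρ0 hw x hx
    obtain ⟨p, hp1, hp2⟩ := hyp_ext x w hρ0
    have hpK : p ∈ K := hw (Metric.mem_closedBall.2 hp1.le)
    have hxp : dist x p ≤ D := hdistD x hx p hpK
    rw [Metric.mem_closedBall]
    linarith
  have hTub : ∀ ρ ∈ T, ρ ≤ D - circumradius K := by
    rintro ρ ⟨hρ0, w, hw⟩
    have hKw := hKsub ρ w hρ0 hw
    have h0 : 0 ≤ D - ρ := le_trans dist_nonneg (Metric.mem_closedBall.1 (hKw hx₀))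
    have : circumradius K ≤ D - ρ := csInf_le hSbdd ⟨h0, w, hKw⟩
    linarith
  have hTbdd : BddAbove T := ⟨D - circumradius K, fun ρ hρ => hTub ρ hρ⟩
  have hr : inradius K = D - circumradius K :=
    le_antisymm (csSup_le ⟨D - circumradius K, hDRT⟩ hTub) (le_csSup hTbdd hDRT)
  have hr0 : 0 ≤ inradius K := by rw [hr]; linarith
  -- part 3
  have hpart3 : ∀ z : ℍ, Metric.closedBall z (inradius K) ⊆ K →
      K ⊆ Metric.closedBall z (circumradius K) := by
    intro w hw
    have := hKsub (inradius K) w hr0 hw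
    have heq : D - inradius K = circumradius K := by rw [hr]; ring
    rwa [heq] at this
  have hz₀ball : Metric.closedBall z₀ (inradius K) ⊆ K := by rw [hr]; exact hball
  refine ⟨by rw [hr]; ring, ⟨z₀, hz₀ball, ?_⟩, hpart3⟩
  -- uniqueness
  intro w hw
  by_contra hne
  have hK₁ : ∀ x ∈ K, dist x w ≤ circumradius K :=
    fun x hx => Metric.mem_closedBall.1 (hpart3 w hw hx)
  have hK₂ : ∀ x ∈ K, dist x z₀ ≤ circumradius K := hKz₀
  -- midpoint
  obtain ⟨m, hmc⟩ : ∃ m : ℍ, (m : ℂ) = ((w : ℂ) + (z₀ : ℂ)) / 2 := by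
    refine ⟨UpperHalfPlane.mk ⟨(w.re + z₀.re) / 2, (w.im + z₀.im) / 2⟩
      (by have := w.im_pos; have := z₀.im_pos; dsimp; positivity), ?_⟩
    apply Complex.ext <;>
      simp [Complex.add_re, Complex.add_im, Complex.div_ofNat_re,
        Complex.div_ofNat_im, coe_re, coe_im]
  have hmim : m.im = (w.im + z₀.im) / 2 := by
    rw [← coe_im, hmc]
    simp [Complex.add_im, Complex.div_ofNat_im, coe_im]
  have hmpos : 0 < m.im := m.im_pos
  set δ := dist (w : ℂ) (z₀ : ℂ) with hδdef
  have hδpos : 0 < δ := dist_pos.2 (fun h => hne (UpperHalfPlane.ext h))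
  set B := x₀.im * Real.exp D with hBdef
  have hB0 : 0 < B := by have := x₀.im_pos; positivity
  have hB : ∀ x ∈ K, x.im ≤ B := by
    intro x hx
    calc x.im ≤ x₀.im * Real.exp (dist x x₀) := im_le_im_mul_exp_dist x x₀
      _ ≤ B := by
          rw [hBdef]
          have h1 := hdistD x hx x₀ hx₀
          have h2 := x₀.im_pos
          have := Real.exp_le_exp.2 h1
          nlinarith
  set ε := δ ^ 2 / (8 * m.im * B) with hεdef
  have hε0 : 0 < ε := by positivity
  have key : ∀ x ∈ K, Real.cosh (dist x m) ≤ Real.cosh (circumradius K) - ε := by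
    intro x hx
    have hx0 : (0:ℝ) < x.im := x.im_pos
    have hc1 : Real.cosh (dist x w) ≤ Real.cosh (circumradius K) := by
      rw [Real.cosh_le_cosh, abs_of_nonneg dist_nonneg, abs_of_nonneg hR0]
      exact hK₁ x hx
    have hc2 : Real.cosh (dist x z₀) ≤ Real.cosh (circumradius K) := by
      rw [Real.cosh_le_cosh, abs_of_nonneg dist_nonneg, abs_of_nonneg hR0]
      exact hK₂ x hx
    have e1 : m.im * Real.cosh (dist x m) =
        m.im + dist (x : ℂ) (m : ℂ) ^ 2 / (2 * x.im) := by
      rw [cosh_dist]; field_simp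
    have e2 : w.im * Real.cosh (dist x w) =
        w.im + dist (x : ℂ) (w : ℂ) ^ 2 / (2 * x.im) := by
      rw [cosh_dist]; field_simp
    have e3 : z₀.im * Real.cosh (dist x z₀) =
        z₀.im + dist (x : ℂ) (z₀ : ℂ) ^ 2 / (2 * x.im) := by
      rw [cosh_dist]; field_simp
    have par : 4 * dist (x : ℂ) (m : ℂ) ^ 2 + δ ^ 2 =
        2 * (dist (x : ℂ) (w : ℂ) ^ 2 + dist (x : ℂ) (z₀ : ℂ) ^ 2) := by
      have hpar := parallelogram_law_with_norm ℝ ((x : ℂ) - w) ((x : ℂ) - z₀)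
      have h2 : ((x : ℂ) - w) + ((x : ℂ) - z₀) = (2 : ℂ) * ((x : ℂ) - (m : ℂ)) := by
        rw [hmc]; ring
      have h3 : ((x : ℂ) - w) - ((x : ℂ) - z₀) = (z₀ : ℂ) - (w : ℂ) := by ring
      rw [h2, h3] at hpar
      have h4 : ‖(2 : ℂ) * ((x : ℂ) - m)‖ = 2 * ‖(x : ℂ) - (m : ℂ)‖ := by
        rw [norm_mul]; norm_num
      have h5 : ‖(z₀ : ℂ) - (w : ℂ)‖ = ‖(w : ℂ) - (z₀ : ℂ)‖ := norm_sub_rev _ _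
      rw [h4, h5] at hpar
      simp only [hδdef, dist_eq_norm]
      nlinarith [hpar]
    have eq4 : m.im * Real.cosh (dist x m) =
        (w.im * Real.cosh (dist x w) + z₀.im * Real.cosh (dist x z₀)) / 2
          - δ ^ 2 / (8 * x.im) := by
      have hmim' : m.im = (w.im + z₀.im) / 2 := hmim
      linear_combination e1 - e2 / 2 - e3 / 2 + par / (8 * x.im) +
        hmim'
    have hd8 : δ ^ 2 / (8 * B) ≤ δ ^ 2 / (8 * x.im) := by
      apply div_le_div_of_nonneg_left (by positivity) (by positivity)
      nlinarith [hB x hx]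
    have t1 : w.im * Real.cosh (dist x w) ≤ w.im * Real.cosh (circumradius K) :=
      mul_le_mul_of_nonneg_left hc1 w.im_pos.le
    have t2 : z₀.im * Real.cosh (dist x z₀) ≤ z₀.im * Real.cosh (circumradius K) :=
      mul_le_mul_of_nonneg_left hc2 z₀.im_pos.le
    have step : m.im * Real.cosh (dist x m) ≤
        m.im * Real.cosh (circumradius K) - δ ^ 2 / (8 * B) := by
      rw [eq4, hmim]
      linarith
    have hεm : m.im * ε = δ ^ 2 / (8 * B) := by
      rw [hεdef]; field_simp
    have : m.im * Real.cosh (dist x m) ≤ m.im * (Real.cosh (circumradius K) - ε) := by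
      rw [mul_sub, hεm]; linarith
    exact le_of_mul_le_mul_left this hmpos
  have h1leC : 1 ≤ Real.cosh (circumradius K) - ε :=
    le_trans (Real.one_le_cosh _) (key x₀ hx₀)
  set C := Real.cosh (circumradius K) - ε with hCdef
  have hC2 : 0 ≤ C ^ 2 - 1 := by nlinarith
  set y := C + Real.sqrt (C ^ 2 - 1) with hydef
  have hy1 : 1 ≤ y := by have := Real.sqrt_nonneg (C ^ 2 - 1); rw [hydef]; linarith
  have hy0 : 0 < y := by linarith
  set R' := Real.log y with hR'def
  have hcoshR' : Real.cosh R' = C := by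
    rw [hR'def, Real.cosh_log hy0]
    have hmul : y * (C - Real.sqrt (C ^ 2 - 1)) = 1 := by
      have hs := Real.sq_sqrt hC2
      rw [hydef]; nlinarith [hs]
    have hinv : y⁻¹ = C - Real.sqrt (C ^ 2 - 1) := inv_eq_of_mul_eq_one_right hmul
    rw [hinv, hydef]; ring
  have hR'0 : 0 ≤ R' := Real.log_nonneg hy1
  have hR'R : R' < circumradius K := by
    have hlt : Real.cosh R' < Real.cosh (circumradius K) := by
      rw [hcoshR', hCdef]; linarith
    have := Real.cosh_lt_cosh.1 hlt
    rwa [abs_of_nonneg hR'0, abs_of_nonneg hR0] at this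
  have hdistm : ∀ x ∈ K, dist x m ≤ R' := by
    intro x hx
    have h := key x hx
    rw [← hcoshR'] at h
    have := Real.cosh_le_cosh.1 h
    rwa [abs_of_nonneg dist_nonneg, abs_of_nonneg hR'0] at this
  have hsubm : Metric.closedBall m (D - R') ⊆ K := by
    intro yy hyy
    rw [Metric.mem_closedBall] at hyy
    rw [hchar]
    intro x hx
    calc dist x yy ≤ dist x m + dist m yy := dist_triangle _ _ _
      _ ≤ R' + (D - R') := add_le_add (hdistm x hx) (by rwa [dist_comm] at hyy)
      _ = D := by ring
  have hmT : D - R' ∈ T := ⟨by linarith, m, hsubm⟩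
  have := hTub _ hmT
  linarith
end

section
/- Let K ⊆ H² be a compact set with Metric.diam K = D > 0. Then there exists a unique point p ∈ H² such that K ⊆ Metric.closedBall p (R(K)); i.e. the circumscribed ball of a compact set in the hyperbolic plane exists and is unique. -/
open UpperHalfPlane

private lemma key_poly (a₁ b₁ a₂ b₂ u v C : ℝ) (hb₁ : 0 < b₁) (hb₂ : 0 < b₂) (_hv : 0 < v)
    (h1 : (u - a₁) ^ 2 + v ^ 2 + b₁ ^ 2 ≤ 2 * b₁ * v * C)
    (h2 : (u - a₂) ^ 2 + v ^ 2 + b₂ ^ 2 ≤ 2 * b₂ * v * C) :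
    (u - (a₁ * b₂ + a₂ * b₁) / (b₁ + b₂)) ^ 2 + v ^ 2
      + ((a₁ - a₂) ^ 2 + (b₁ + b₂) ^ 2) * (b₁ * b₂) / (b₁ + b₂) ^ 2
      ≤ 2 * v * (2 * b₁ * b₂ / (b₁ + b₂)) * C := by
  have hb : 0 < b₁ + b₂ := by positivity
  have hident : ((u - (a₁ * b₂ + a₂ * b₁) / (b₁ + b₂)) ^ 2 + v ^ 2
      + ((a₁ - a₂) ^ 2 + (b₁ + b₂) ^ 2) * (b₁ * b₂) / (b₁ + b₂) ^ 2) * (b₁ + b₂)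
      = b₂ * ((u - a₁) ^ 2 + v ^ 2 + b₁ ^ 2) + b₁ * ((u - a₂) ^ 2 + v ^ 2 + b₂ ^ 2) := by
    field_simp
    ring
  rw [show 2 * v * (2 * b₁ * b₂ / (b₁ + b₂)) * C
      = (b₂ * (2 * b₁ * v * C) + b₁ * (2 * b₂ * v * C)) / (b₁ + b₂) by field_simp; ring,
    le_div_iff₀ hb, hident]
  have e1 := mul_le_mul_of_nonneg_left h1 hb₂.le
  have e2 := mul_le_mul_of_nonneg_left h2 hb₁.le
  linarith

private lemma ball_poly {w p : UpperHalfPlane} {r : ℝ} (h : dist w p ≤ r) :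
    (w.re - p.re) ^ 2 + w.im ^ 2 + p.im ^ 2 ≤ 2 * p.im * w.im * Real.cosh r := by
  have h0 : 0 ≤ r := dist_nonneg.trans h
  have hcos : Real.cosh (dist w p) ≤ Real.cosh r := by
    rw [Real.cosh_le_cosh, abs_of_nonneg dist_nonneg, abs_of_nonneg h0]
    exact h
  rw [UpperHalfPlane.cosh_dist] at hcos
  have hd : dist (w : ℂ) (p : ℂ) ^ 2 = (w.re - p.re) ^ 2 + (w.im - p.im) ^ 2 := by
    rw [Complex.dist_eq_re_im, Real.sq_sqrt (by positivity)]
    simp only [UpperHalfPlane.coe_re, UpperHalfPlane.coe_im]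
  rw [hd] at hcos
  have hwim := w.im_pos
  have hpim := p.im_pos
  have hden : 0 < 2 * w.im * p.im := by positivity
  have hX : (w.re - p.re) ^ 2 + (w.im - p.im) ^ 2 ≤ (Real.cosh r - 1) * (2 * w.im * p.im) :=
    (div_le_iff₀ hden).mp (by linarith)
  nlinarith [hX]

/-- a compact set `K ⊆ H²` of diameter `D > 0` has a unique
circumscribed ball: there is exactly one point `p` with
`K ⊆ closedBall p (R(K))`. -/
theorem stmt_17 (K : Set UpperHalfPlane) (hKcp : IsCompact K)
    (D : ℝ) (hD : 0 < D) (hdiam : Metric.diam K = D) :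
    ∃! p : UpperHalfPlane, K ⊆ Metric.closedBall p (circumradius K) := by
  have hKne : K.Nonempty := by
    rcases K.eq_empty_or_nonempty with h | h
    · rw [h, Metric.diam_empty] at hdiam; linarith
    · exact h
  obtain ⟨w₀, hw₀⟩ := hKne
  set S := {r : ℝ | 0 ≤ r ∧ ∃ z : UpperHalfPlane, K ⊆ Metric.closedBall z r} with hS
  set R := circumradius K with hRdef
  have hRS : R = sInf S := by rw [hRdef, circumradius, hS]
  have hSne : S.Nonempty := by
    refine ⟨D, hD.le, w₀, fun w hw => ?_⟩
    rw [Metric.mem_closedBall]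
    exact hdiam ▸ Metric.dist_le_diam_of_mem hKcp.isBounded hw hw₀
  have hSbdd : BddBelow S := ⟨0, fun r hr => hr.1⟩
  have hR0 : 0 ≤ R := hRS ▸ le_csInf hSne fun r hr => hr.1
  -- existence of a sequence of almost-optimal centers
  have hex : ∀ n : ℕ, ∃ z : UpperHalfPlane, K ⊆ Metric.closedBall z (R + 1 / ((n : ℝ) + 1)) := by
    intro n
    have hlt : sInf S < R + 1 / ((n : ℝ) + 1) := by
      rw [← hRS]; exact lt_add_of_pos_right _ (by positivity)
    obtain ⟨r, hrS, hrlt⟩ := exists_lt_of_csInf_lt hSne hlt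
    obtain ⟨z, hz⟩ := hrS.2
    exact ⟨z, hz.trans (Metric.closedBall_subset_closedBall hrlt.le)⟩
  choose z hz using hex
  have hzball : ∀ n, z n ∈ Metric.closedBall w₀ (R + 1) := by
    intro n
    rw [Metric.mem_closedBall, dist_comm]
    have h1 := Metric.mem_closedBall.mp (hz n hw₀)
    have h2 : 1 / ((n : ℝ) + 1) ≤ 1 := by
      rw [div_le_one (by positivity)]
      have : (0 : ℝ) ≤ n := Nat.cast_nonneg n
      linarith
    linarith
  obtain ⟨p, -, φ, hφ, hlim⟩ :=
    (isCompact_closedBall w₀ (R + 1)).tendsto_subseq hzball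
  have hpball : K ⊆ Metric.closedBall p R := by
    intro w hw
    rw [Metric.mem_closedBall]
    have hle : ∀ n, dist w p ≤ R + 1 / ((φ n : ℝ) + 1) + dist (z (φ n)) p := by
      intro n
      have hwz : dist w (z (φ n)) ≤ R + 1 / ((φ n : ℝ) + 1) :=
        Metric.mem_closedBall.mp (hz (φ n) hw)
      have := dist_triangle w (z (φ n)) p
      linarith
    have htend : Filter.Tendsto (fun n => R + 1 / ((φ n : ℝ) + 1) + dist (z (φ n)) p)
        Filter.atTop (nhds (R + 0 + 0)) := by
      refine Filter.Tendsto.add (Filter.Tendsto.add tendsto_const_nhds ?_) ?_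
      · exact tendsto_one_div_add_atTop_nhds_zero_nat.comp hφ.tendsto_atTop
      · exact tendsto_iff_dist_tendsto_zero.mp hlim
    have := ge_of_tendsto' htend hle
    simpa using this
  refine ⟨p, hpball, ?_⟩
  intro q hq
  by_contra hne
  -- set up notation
  set a₁ := p.re with ha₁
  set b₁ := p.im with hb₁def
  set a₂ := q.re with ha₂
  set b₂ := q.im with hb₂def
  set C := Real.cosh R with hCdef
  have hb₁ : 0 < b₁ := p.im_pos
  have hb₂ : 0 < b₂ := q.im_pos
  have hne2 : a₁ ≠ a₂ ∨ b₁ ≠ b₂ := by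
    by_contra h
    push_neg at h
    exact hne (UpperHalfPlane.ext' h.1.symm h.2.symm)
  have hpos : 0 < (a₁ - a₂) ^ 2 + (b₁ - b₂) ^ 2 := by
    rcases hne2 with h | h
    · have h' : a₁ - a₂ ≠ 0 := sub_ne_zero.mpr h
      nlinarith [sq_nonneg (b₁ - b₂), sq_pos_of_ne_zero h']
    · have h' : b₁ - b₂ ≠ 0 := sub_ne_zero.mpr h
      nlinarith [sq_nonneg (a₁ - a₂), sq_pos_of_ne_zero h']
  set s := Real.sqrt (((a₁ - a₂) ^ 2 + (b₁ + b₂) ^ 2) / (4 * b₁ * b₂)) with hsdef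
  have hs2 : s ^ 2 = ((a₁ - a₂) ^ 2 + (b₁ + b₂) ^ 2) / (4 * b₁ * b₂) :=
    Real.sq_sqrt (by positivity)
  have hs1 : 1 < s := by
    rw [hsdef, show (1 : ℝ) = Real.sqrt 1 by simp]
    apply Real.sqrt_lt_sqrt zero_le_one
    rw [lt_div_iff₀ (by positivity)]
    nlinarith
  have hs0 : 0 < s := lt_trans one_pos hs1
  set b' := s * (2 * b₁ * b₂) / (b₁ + b₂) with hb'def
  have hb'pos : 0 < b' := div_pos (mul_pos hs0 (by positivity)) (by positivity)
  set a' := (a₁ * b₂ + a₂ * b₁) / (b₁ + b₂) with ha'def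
  set p' : UpperHalfPlane := UpperHalfPlane.mk ⟨a', b'⟩ (by simpa using hb'pos) with hp'def
  have hp're : p'.re = a' := rfl
  have hp'im : p'.im = b' := rfl
  -- the key estimate
  have key : ∀ w ∈ K, Real.cosh (dist w p') ≤ C / s := by
    intro w hw
    have h1 : (w.re - a₁) ^ 2 + w.im ^ 2 + b₁ ^ 2 ≤ 2 * b₁ * w.im * C :=
      ball_poly (Metric.mem_closedBall.mp (hpball hw))
    have h2 : (w.re - a₂) ^ 2 + w.im ^ 2 + b₂ ^ 2 ≤ 2 * b₂ * w.im * C :=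
      ball_poly (Metric.mem_closedBall.mp (hq hw))
    have hkey := key_poly a₁ b₁ a₂ b₂ w.re w.im C hb₁ hb₂ w.im_pos h1 h2
    rw [UpperHalfPlane.cosh_dist]
    have hd : dist (w : ℂ) (p' : ℂ) ^ 2 = (w.re - a') ^ 2 + (w.im - b') ^ 2 := by
      rw [Complex.dist_eq_re_im, Real.sq_sqrt (by positivity)]
      simp only [UpperHalfPlane.coe_re, UpperHalfPlane.coe_im, hp're, hp'im]
    rw [hd, hp'im]
    have hwim := w.im_pos
    have hden : 0 < 2 * w.im * b' := by positivity
    have hb'sq : b' ^ 2 = ((a₁ - a₂) ^ 2 + (b₁ + b₂) ^ 2) * (b₁ * b₂) / (b₁ + b₂) ^ 2 := by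
      rw [hb'def, div_pow, mul_pow, hs2]
      field_simp
      ring
    have hCs : 2 * w.im * b' * (C / s) = 2 * w.im * (2 * b₁ * b₂ / (b₁ + b₂)) * C := by
      rw [hb'def]
      field_simp
    have hX : (w.re - a') ^ 2 + (w.im - b') ^ 2 ≤ (C / s - 1) * (2 * w.im * b') := by
      linarith [hkey, hb'sq, hCs]
    have := (div_le_iff₀ hden).mpr hX
    linarith
  have hC1 : 1 ≤ C := hCdef ▸ Real.one_le_cosh R
  have hCs1 : 1 ≤ C / s := le_trans (Real.one_le_cosh _) (key w₀ hw₀)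
  set r := Real.arsinh (Real.sqrt ((C / s) ^ 2 - 1)) with hrdef
  have hr0 : 0 ≤ r := by
    rw [hrdef, ← Real.arsinh_zero, Real.arsinh_le_arsinh]
    · exact Real.sqrt_nonneg _
  have hcoshr : Real.cosh r = C / s := by
    rw [hrdef, Real.cosh_arsinh,
      Real.sq_sqrt (show (0 : ℝ) ≤ (C / s) ^ 2 - 1 by nlinarith),
      show 1 + ((C / s) ^ 2 - 1) = (C / s) ^ 2 by ring,
      Real.sqrt_sq (by linarith)]
  have hrR : r < R := by
    have hcc : Real.cosh r < Real.cosh R := by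
      rw [hcoshr, ← hCdef, div_lt_iff₀ hs0]
      nlinarith
    have := Real.cosh_lt_cosh.mp hcc
    rwa [abs_of_nonneg hr0, abs_of_nonneg hR0] at this
  have hrS : r ∈ S := by
    refine ⟨hr0, p', fun w hw => ?_⟩
    rw [Metric.mem_closedBall]
    have hc := key w hw
    rw [← hcoshr] at hc
    have h := Real.cosh_le_cosh.mp hc
    rwa [abs_of_nonneg dist_nonneg, abs_of_nonneg hr0] at h
  have : sInf S ≤ r := csInf_le hSbdd hrS
  rw [← hRS] at this
  linarith
end

section
/- (Hyperbolic Jung inequality in the plane.) Let K ⊆ H² be a compact set with Metric.diam K = D > 0. Then D/2 ≤ R(K) and Real.sinh (R(K)) ≤ (2/√3) · Real.sinh (D/2), where arsinh((2/√3)·sinh(D/2)) is the circumradius of the regular (equilateral) hyperbolic triangle of side length D; in particular R(K) < D. -/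
open UpperHalfPlane

namespace JungAux

/-- Minkowski pairing on ℝ³ (signature ++-). -/
def mink (u v : Fin 3 → ℝ) : ℝ := u 0 * v 0 + u 1 * v 1 - u 2 * v 2

/-- Hyperboloid model embedding of the upper half-plane. -/
noncomputable def hyp (z : ℍ) : Fin 3 → ℝ :=
  ![z.re / z.im, (z.re ^ 2 + z.im ^ 2 - 1) / (2 * z.im),
    (z.re ^ 2 + z.im ^ 2 + 1) / (2 * z.im)]

lemma mink_comm (u v : Fin 3 → ℝ) : mink u v = mink v u := by unfold mink; ring

lemma hyp_two_pos (z : ℍ) : 0 < hyp z 2 := by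
  have hz := z.im_pos
  have : 0 < z.re ^ 2 + z.im ^ 2 + 1 := by positivity
  simpa [hyp] using div_pos this (by positivity)

lemma mink_hyp (z w : ℍ) : mink (hyp z) (hyp w) = -Real.cosh (dist z w) := by
  have hz := z.im_pos
  have hw := w.im_pos
  rw [UpperHalfPlane.cosh_dist]
  have hd : dist (z : ℂ) (w : ℂ) ^ 2 = (z.re - w.re) ^ 2 + (z.im - w.im) ^ 2 := by
    rw [Complex.dist_eq_re_im, Real.sq_sqrt (by positivity)]
    rfl
  rw [hd]
  simp only [mink, hyp, Matrix.cons_val_zero, Matrix.cons_val_one, Matrix.head_cons,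
    Matrix.cons_val_two, Matrix.tail_cons]
  field_simp
  ring

lemma mink_hyp_self (z : ℍ) : mink (hyp z) (hyp z) = -1 := by
  simpa using mink_hyp z z

lemma hyp_surj (P : Fin 3 → ℝ) (h : mink P P = -1) (h2 : 0 < P 2) :
    ∃ z : ℍ, hyp z = P := by
  have hsq : P 2 ^ 2 = 1 + P 0 ^ 2 + P 1 ^ 2 := by unfold mink at h; nlinarith
  have hgt : P 1 < P 2 := by nlinarith [sq_nonneg (P 0), sq_nonneg (P 2 - P 1)]
  have hy : (0:ℝ) < 1 / (P 2 - P 1) := one_div_pos.mpr (by linarith)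
  refine ⟨UpperHalfPlane.mk ⟨P 0 / (P 2 - P 1), 1 / (P 2 - P 1)⟩ hy, ?_⟩
  have him : (UpperHalfPlane.mk ⟨P 0 / (P 2 - P 1), 1 / (P 2 - P 1)⟩ hy).im
      = 1 / (P 2 - P 1) := rfl
  have hre : (UpperHalfPlane.mk ⟨P 0 / (P 2 - P 1), 1 / (P 2 - P 1)⟩ hy).re
      = P 0 / (P 2 - P 1) := rfl
  have hne : P 2 - P 1 ≠ 0 := by linarith
  have h0 : hyp (UpperHalfPlane.mk ⟨P 0 / (P 2 - P 1), 1 / (P 2 - P 1)⟩ hy) 0 = P 0 := by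
    simp only [hyp, him, hre, Matrix.cons_val_zero]
    field_simp
  have h1 : hyp (UpperHalfPlane.mk ⟨P 0 / (P 2 - P 1), 1 / (P 2 - P 1)⟩ hy) 1 = P 1 := by
    simp only [hyp, him, hre, Matrix.cons_val_one, Matrix.head_cons, Matrix.cons_val_zero]
    field_simp
    nlinarith [hsq]
  have h2' : hyp (UpperHalfPlane.mk ⟨P 0 / (P 2 - P 1), 1 / (P 2 - P 1)⟩ hy) 2 = P 2 := by
    simp only [hyp, Matrix.cons_val_two, Matrix.tail_cons, Matrix.head_cons, him, hre]
    field_simp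
    nlinarith [hsq]
  funext i
  fin_cases i
  · exact h0
  · exact h1
  · exact h2'


lemma A_bddBelow (K : Set ℍ) :
    BddBelow {r : ℝ | 0 ≤ r ∧ ∃ z : ℍ, K ⊆ Metric.closedBall z r} :=
  ⟨0, fun _ hr => hr.1⟩

lemma A_nonempty (K : Set ℍ) (hK : IsCompact K) :
    {r : ℝ | 0 ≤ r ∧ ∃ z : ℍ, K ⊆ Metric.closedBall z r}.Nonempty := by
  obtain ⟨r, hr⟩ := hK.isBounded.subset_closedBall UpperHalfPlane.I
  exact ⟨max r 0, le_max_right _ _, UpperHalfPlane.I,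
    hr.trans (Metric.closedBall_subset_closedBall (le_max_left _ _))⟩

lemma circumradius_le (K : Set ℍ) {r : ℝ} (h0 : 0 ≤ r) (z : ℍ)
    (hz : K ⊆ Metric.closedBall z r) : circumradius K ≤ r :=
  csInf_le (A_bddBelow K) ⟨h0, z, hz⟩

lemma exists_center (K : Set ℍ) (hK : IsCompact K) (hne : K.Nonempty) :
    ∃ c : ℍ, (∀ k ∈ K, dist c k ≤ circumradius K) ∧ ∃ k ∈ K, dist c k = circumradius K := by
  set F : ℍ → ℝ := fun z => sSup ((dist z) '' K) with hF
  have hcont : ∀ z : ℍ, Continuous fun k : ℍ => dist z k :=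
    fun z => Continuous.dist continuous_const continuous_id
  have himg : ∀ z : ℍ, ((dist z) '' K).Nonempty := fun z => hne.image _
  have hbdd : ∀ z : ℍ, BddAbove ((dist z) '' K) :=
    fun z => (hK.image (hcont z)).bddAbove
  have hFd : ∀ z : ℍ, ∀ k ∈ K, dist z k ≤ F z := by
    intro z k hk
    exact le_csSup (hbdd z) ⟨k, hk, rfl⟩
  have hFle : ∀ z : ℍ, ∀ r : ℝ, (∀ k ∈ K, dist z k ≤ r) → F z ≤ r := by
    intro z r h
    exact csSup_le (himg z) (by rintro _ ⟨k, hk, rfl⟩; exact h k hk)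
  have hattain : ∀ z : ℍ, ∃ k ∈ K, dist z k = F z := by
    intro z
    obtain ⟨k, hk, hmax⟩ := hK.exists_isMaxOn hne (hcont z).continuousOn
    refine ⟨k, hk, le_antisymm (hFd z k hk) (hFle z _ fun k' hk' => hmax hk')⟩
  have hlip : ∀ z w : ℍ, F z ≤ F w + dist z w := by
    intro z w
    refine hFle z _ fun k hk => ?_
    calc dist z k ≤ dist z w + dist w k := dist_triangle _ _ _
    _ ≤ dist z w + F w := by linarith [hFd w k hk]
    _ = F w + dist z w := by ring
  have hFcont : Continuous F := by
    refine Metric.continuous_iff.2 fun z ε hε => ⟨ε, hε, fun w hw => ?_⟩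
    have h1 := hlip z w
    have h2 := hlip w z
    rw [Real.dist_eq, abs_lt]
    rw [dist_comm w z] at *
    constructor <;> nlinarith [dist_nonneg (x := z) (y := w)]
  obtain ⟨k₀, hk₀⟩ := hne
  have hFpos : ∀ z : ℍ, 0 ≤ F z := fun z => le_trans dist_nonneg (hFd z k₀ hk₀)
  have hBcp : IsCompact (Metric.closedBall k₀ (F k₀)) := isCompact_closedBall _ _
  have hBne : (Metric.closedBall k₀ (F k₀)).Nonempty :=
    ⟨k₀, Metric.mem_closedBall.2 (by simpa using hFpos k₀)⟩
  obtain ⟨c, hcB, hcmin⟩ := hBcp.exists_isMinOn hBne hFcont.continuousOn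
  have hglobal : ∀ z : ℍ, F c ≤ F z := by
    intro z
    by_cases hz : z ∈ Metric.closedBall k₀ (F k₀)
    · exact hcmin hz
    · have h1 : F k₀ < dist z k₀ := lt_of_not_ge fun h => hz (Metric.mem_closedBall.2 h)
      calc F c ≤ F k₀ := hcmin (Metric.mem_closedBall.2 (by simpa using hFpos k₀))
      _ ≤ dist z k₀ := le_of_lt h1
      _ ≤ F z := hFd z k₀ hk₀
  have hup : F c ≤ circumradius K := by
    refine le_csInf (A_nonempty K hK) ?_
    rintro r ⟨hr0, z, hz⟩
    refine le_trans (hglobal z) (hFle z r fun k hk => ?_)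
    have := hz hk
    rw [Metric.mem_closedBall] at this
    rwa [dist_comm]
  have hdown : circumradius K ≤ F c := by
    refine circumradius_le K (hFpos c) c fun k hk => ?_
    rw [Metric.mem_closedBall, dist_comm]
    exact hFd c k hk
  obtain ⟨k', hk', hk'eq⟩ := hattain c
  refine ⟨c, fun k hk => ?_, k', hk', by rw [hk'eq]; exact le_antisymm hup hdown⟩
  exact (hFd c k hk).trans hup

section NI
open Real

lemma mink_div_left (a b : Fin 3 → ℝ) (t N : ℝ) (x : Fin 3 → ℝ) :
    mink (fun i => (a i + t * b i) / N) x = (mink a x + t * mink b x) / N := by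
  unfold mink; ring

lemma continuous_mink_hyp (v : Fin 3 → ℝ) :
    Continuous fun k : ℍ => mink v (hyp k) := by
  have him : ∀ k : ℍ, k.im ≠ 0 := fun k => k.im_pos.ne'
  have h0 : Continuous fun k : ℍ => hyp k 0 := by
    simp only [hyp, Matrix.cons_val_zero]
    exact UpperHalfPlane.continuous_re.div UpperHalfPlane.continuous_im him
  have h1 : Continuous fun k : ℍ => hyp k 1 := by
    simp only [hyp, Matrix.cons_val_one, Matrix.head_cons]
    exact (((UpperHalfPlane.continuous_re.pow 2).add
      (UpperHalfPlane.continuous_im.pow 2)).sub continuous_const).div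
      (continuous_const.mul UpperHalfPlane.continuous_im)
      (fun k => by simpa using him k)
  have h2 : Continuous fun k : ℍ => hyp k 2 := by
    simp only [hyp, Matrix.cons_val_two, Matrix.tail_cons, Matrix.head_cons]
    exact (((UpperHalfPlane.continuous_re.pow 2).add
      (UpperHalfPlane.continuous_im.pow 2)).add continuous_const).div
      (continuous_const.mul UpperHalfPlane.continuous_im)
      (fun k => by simpa using him k)
  unfold mink
  exact ((continuous_const.mul h0).add (continuous_const.mul h1)).sub
    (continuous_const.mul h2)

set_option maxHeartbeats 1000000 in
lemma no_improving (K : Set ℍ) (hK : IsCompact K) (c : ℍ) (hR : 0 < circumradius K)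
    (hc : ∀ k ∈ K, dist c k ≤ circumradius K)
    (hS : ∃ k ∈ K, dist c k = circumradius K)
    (v : Fin 3 → ℝ) (hv : mink v (hyp c) = 0) (hq : 0 < mink v v)
    (himp : ∀ k ∈ K, dist c k = circumradius K → 0 < mink v (hyp k)) : False := by
  set R := circumradius K with hRdef
  set g : ℍ → ℝ := fun k => mink v (hyp k) with hgdef
  have hgc : Continuous g := continuous_mink_hyp v
  -- the sphere set
  set S : Set ℍ := K ∩ {k | dist c k = R} with hSdef
  have hScl : IsClosed {k : ℍ | dist c k = R} :=
    isClosed_eq (Continuous.dist continuous_const continuous_id) continuous_const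
  have hScp : IsCompact S := hK.inter_right hScl
  have hSne : S.Nonempty := by obtain ⟨k, hk, hd⟩ := hS; exact ⟨k, hk, hd⟩
  obtain ⟨kδ, hkδ, hδmin⟩ := hScp.exists_isMinOn hSne hgc.continuousOn
  set δ := g kδ with hδdef
  have hδpos : 0 < δ := himp kδ hkδ.1 hkδ.2
  -- epsilon separation
  have hε : ∃ ε > 0, ∀ k ∈ K, R - ε ≤ dist c k → δ / 2 ≤ g k := by
    by_contra hcon
    push_neg at hcon
    set T : ℕ → Set ℍ :=
      fun n => {k ∈ K | R - 1 / (n + 1) ≤ dist c k ∧ g k ≤ δ / 2} with hTdef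
    have hTcl : ∀ n, IsClosed (T n) := by
      intro n
      refine IsClosed.inter hK.isClosed (IsClosed.inter ?_ ?_)
      · exact isClosed_le continuous_const (Continuous.dist continuous_const continuous_id)
      · exact isClosed_le hgc continuous_const
    have hTcp : ∀ n, IsCompact (T n) := fun n =>
      hK.of_isClosed_subset (hTcl n) (fun k hk => hk.1)
    have hTne : ∀ n : ℕ, (T n).Nonempty := by
      intro n
      have hpos : (0:ℝ) < 1 / (n + 1) := by positivity
      obtain ⟨k, hk, hd, hg⟩ := hcon (1 / (n + 1)) hpos
      exact ⟨k, hk, hd, le_of_lt hg⟩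
    have hTmono : ∀ n : ℕ, T (n + 1) ⊆ T n := by
      intro n k hk
      refine ⟨hk.1, le_trans ?_ hk.2.1, hk.2.2⟩
      have h1 : (1:ℝ) / (n + 1 + 1) ≤ 1 / (n + 1) := by
        apply one_div_le_one_div_of_le <;> push_cast <;> linarith [Nat.cast_nonneg (α := ℝ) n]
      push_cast
      push_cast at h1
      linarith
    obtain ⟨kk, hkk⟩ := IsCompact.nonempty_iInter_of_sequence_nonempty_isCompact_isClosed
      T hTmono hTne (hTcp 0) hTcl
    simp only [Set.mem_iInter] at hkk
    have hkkK : kk ∈ K := (hkk 0).1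
    have hdist : dist c kk = R := by
      refine le_antisymm (hc _ hkkK) ?_
      by_contra h
      push_neg at h
      obtain ⟨n, hn⟩ := exists_nat_one_div_lt (show (0:ℝ) < R - dist c kk by linarith)
      have := (hkk n).2.1
      push_cast at this hn
      linarith
    have h1 : δ ≤ g kk := hδmin (⟨hkkK, hdist⟩ : kk ∈ S)
    have h2 : g kk ≤ δ / 2 := (hkk 0).2.2
    linarith
  obtain ⟨ε₀, hε₀pos, hε₀⟩ := hε
  set ε := min ε₀ R with hεdef
  have hεpos : 0 < ε := lt_min hε₀pos hR
  have hεR : ε ≤ R := min_le_right _ _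
  have hεnear : ∀ k ∈ K, R - ε ≤ dist c k → δ / 2 ≤ g k := by
    intro k hk hd
    exact hε₀ k hk (by have := min_le_left ε₀ R; linarith)
  -- global bound M
  have hKne : K.Nonempty := hSne.mono (Set.inter_subset_left)
  obtain ⟨kM, hkM, hMmax⟩ := hK.exists_isMaxOn hKne (hgc.abs).continuousOn
  set M := |g kM| with hMdef
  have hM0 : 0 ≤ M := abs_nonneg _
  have hMb : ∀ k ∈ K, |g k| ≤ M := fun k hk => hMmax hk
  set q := mink v v with hqdef
  have hcoshR : 1 ≤ Real.cosh R := Real.one_le_cosh R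
  set η := Real.cosh R - Real.cosh (R - ε) with hηdef
  have hηpos : 0 < η := by
    have : Real.cosh (R - ε) < Real.cosh R := by
      rw [Real.cosh_lt_cosh, abs_of_nonneg (by linarith), abs_of_nonneg (le_of_lt hR)]
      linarith
    linarith
  have hc2 : 0 < hyp c 2 := hyp_two_pos c
  set t := min (δ / (2 * Real.cosh R * q + 1))
      (min (η / (M + Real.cosh R * q + 1))
        (min (1 / (q + 1)) (hyp c 2 / (|v 2| + 1)))) with htdef
  have ht0 : 0 < t := by
    refine lt_min (by positivity) (lt_min (by positivity) (lt_min (by positivity) ?_))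
    positivity
  have htA : t ≤ δ / (2 * Real.cosh R * q + 1) := min_le_left _ _
  have htB : t ≤ η / (M + Real.cosh R * q + 1) :=
    le_trans (min_le_right _ _) (min_le_left _ _)
  have htC : t ≤ hyp c 2 / (|v 2| + 1) :=
    le_trans (min_le_right _ _) (le_trans (min_le_right _ _) (min_le_right _ _))
  have ht1 : t ≤ 1 / (q + 1) :=
    le_trans (min_le_right _ _) (le_trans (min_le_right _ _) (min_le_left _ _))
  have htle1 : t ≤ 1 := le_trans ht1 (by rw [div_le_one (by linarith)]; linarith)
  have htq : t ^ 2 * q < 1 := by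
    have h1 : t * q ≤ 1 / (q + 1) * q := mul_le_mul_of_nonneg_right ht1 (le_of_lt hq)
    have h2 : 1 / (q + 1) * q < 1 := by
      rw [div_mul_eq_mul_div, div_lt_one (by linarith)]; linarith
    nlinarith [mul_nonneg (sub_nonneg.2 htle1) (mul_nonneg ht0.le hq.le)]
  set N := Real.sqrt (1 - t ^ 2 * q) with hNdef
  have hN2 : N ^ 2 = 1 - t ^ 2 * q := Real.sq_sqrt (by linarith)
  have hNpos : 0 < N := Real.sqrt_pos.2 (by linarith)
  have hNge : 1 - t ^ 2 * q ≤ N := by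
    have ha0 : 0 ≤ 1 - t ^ 2 * q := by linarith
    have ha1 : (1 - t ^ 2 * q) ^ 2 ≤ 1 - t ^ 2 * q := by
      nlinarith [mul_nonneg (mul_nonneg ht0.le ht0.le) hq.le]
    calc 1 - t ^ 2 * q = Real.sqrt ((1 - t ^ 2 * q) ^ 2) := (Real.sqrt_sq ha0).symm
    _ ≤ N := Real.sqrt_le_sqrt ha1
  set P : Fin 3 → ℝ := fun i => (hyp c i + t * v i) / N with hPdef
  have hcc : mink (hyp c) (hyp c) = -1 := mink_hyp_self c
  have hvc : mink (hyp c) v = 0 := by rw [mink_comm]; exact hv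
  have hgfun : ∀ k : ℍ, g k = mink v (hyp k) := fun _ => rfl
  clear_value R g S δ ε M q η t N P
  have hPP : mink P P = -1 := by
    have expand : mink P P = (mink (hyp c) (hyp c) + 2 * t * mink (hyp c) v
        + t ^ 2 * mink v v) / N ^ 2 := by
      simp only [hPdef]; unfold mink; ring
    rw [expand, hcc, hvc, ← hqdef, hN2]
    have hne : 1 - t ^ 2 * q ≠ 0 := by linarith
    field_simp
    ring
  have hP2 : 0 < P 2 := by
    have h1 : t * (|v 2| + 1) ≤ hyp c 2 := by
      calc t * (|v 2| + 1) ≤ hyp c 2 / (|v 2| + 1) * (|v 2| + 1) :=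
            mul_le_mul_of_nonneg_right htC (by positivity)
      _ = hyp c 2 := by field_simp
    have h2 : -(t * |v 2|) ≤ t * v 2 := by
      have := neg_abs_le (v 2)
      nlinarith [ht0]
    have h3 : 0 < hyp c 2 + t * v 2 := by nlinarith [ht0]
    have h4 : P 2 = (hyp c 2 + t * v 2) / N := by rw [hPdef]
    rw [h4]
    exact div_pos h3 hNpos
  obtain ⟨z', hz'⟩ := hyp_surj P hPP hP2
  have key : ∀ k ∈ K, Real.cosh (dist z' k) < Real.cosh R := by
    intro k hk
    have hck : mink (hyp c) (hyp k) = -Real.cosh (dist c k) := mink_hyp c k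
    have hPk : mink P (hyp k) = (mink (hyp c) (hyp k) + t * mink v (hyp k)) / N := by
      simp only [hPdef]; unfold mink; ring
    have hzk : Real.cosh (dist z' k) * N = Real.cosh (dist c k) - t * mink v (hyp k) := by
      have h := mink_hyp z' k
      rw [hz', hPk, hck] at h
      rw [div_eq_iff hNpos.ne'] at h
      linarith
    have hgk' : g k = mink v (hyp k) := hgfun k
    rw [← mul_lt_mul_iff_left₀ hNpos, hzk]
    have hNlow : Real.cosh R * (1 - t ^ 2 * q) ≤ Real.cosh R * N :=
      mul_le_mul_of_nonneg_left hNge (by linarith)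
    by_cases hnear : R - ε ≤ dist c k
    · have hg : δ / 2 ≤ g k := hεnear k hk hnear
      have hcosh : Real.cosh (dist c k) ≤ Real.cosh R := by
        rw [Real.cosh_le_cosh, abs_of_nonneg dist_nonneg, abs_of_nonneg (le_of_lt hR)]
        exact hc k hk
      have htδ : Real.cosh R * q * t ^ 2 < t * (δ / 2) := by
        have h1 : t * (2 * Real.cosh R * q + 1) ≤ δ := by
          calc t * (2 * Real.cosh R * q + 1)
              ≤ δ / (2 * Real.cosh R * q + 1) * (2 * Real.cosh R * q + 1) :=
                mul_le_mul_of_nonneg_right htA (by positivity)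
          _ = δ := by field_simp
        nlinarith [ht0, hq, hcoshR]
      rw [hgk'] at hg
      nlinarith [mul_le_mul_of_nonneg_left hg (le_of_lt ht0)]
    · push_neg at hnear
      have hcosh : Real.cosh (dist c k) ≤ Real.cosh (R - ε) := by
        rw [Real.cosh_le_cosh, abs_of_nonneg dist_nonneg, abs_of_nonneg (by linarith)]
        linarith
      have hgk : -M ≤ mink v (hyp k) := by
        have h := (abs_le.1 (hMb k hk)).1
        rw [hgk'] at h
        linarith
      have htη : t * M + Real.cosh R * q * t ^ 2 < η := by
        have h1 : t * (M + Real.cosh R * q + 1) ≤ η := by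
          calc t * (M + Real.cosh R * q + 1)
              ≤ η / (M + Real.cosh R * q + 1) * (M + Real.cosh R * q + 1) :=
                mul_le_mul_of_nonneg_right htB (by positivity)
          _ = η := by field_simp
        have e1 : Real.cosh R * q * t ^ 2 ≤ Real.cosh R * q * t := by
          nlinarith [mul_nonneg (mul_nonneg (le_trans zero_le_one hcoshR) hq.le)
            (mul_nonneg ht0.le (sub_nonneg.2 htle1))]
        nlinarith [ht0]
      nlinarith [ht0]
  have hlt : ∀ k ∈ K, dist z' k < R := by
    intro k hk
    have := key k hk
    rw [Real.cosh_lt_cosh, abs_of_nonneg dist_nonneg, abs_of_nonneg (le_of_lt hR)] at this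
    exact this
  obtain ⟨k', hk', hmax'⟩ := hK.exists_isMaxOn hKne
    (Continuous.dist continuous_const continuous_id : Continuous fun k : ℍ => dist z' k).continuousOn
  have hRle : R ≤ dist z' k' := by
    rw [hRdef]
    refine circumradius_le K dist_nonneg z' fun k hk => ?_
    rw [Metric.mem_closedBall, dist_comm]
    exact hmax' hk
  exact absurd (hlt k' hk') (not_lt.2 hRle)

end NI

section Pair
open Real

lemma jung_algebra (s2 m α β : ℝ) (hs : 0 < s2) (hm1 : -s2/2 < m) (hm2 : m < s2)
    (h1 : m ≤ α*s2 + β*m) (h2 : m ≤ α*m + β*s2)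
    (h3 : α^2*s2 + 2*α*β*m + β^2*s2 = s2) : 0 < α + β := by
  by_contra hcon
  push_neg at hcon
  have hsm : (0:ℝ) < s2 + m := by linarith
  rcases lt_trichotomy m 0 with hm | hm | hm
  · have hy1 : 2*m ≤ (α+β)*(s2+m) := by nlinarith [h1, h2]
    have hy2 : (α+β)*(s2+m) ≤ 0 := by
      nlinarith [mul_nonneg (neg_nonneg.2 hcon) hsm.le]
    have hd1 : -((α+β)*(s2+m) - 2*m) ≤ (α-β)*(s2-m) := by nlinarith [h1]
    have hd2 : (α-β)*(s2-m) ≤ (α+β)*(s2+m) - 2*m := by nlinarith [h2]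
    have hDsq : ((α-β)*(s2-m))^2 ≤ ((α+β)*(s2+m) - 2*m)^2 := by
      nlinarith [mul_nonneg (sub_nonneg.2 hd2)
        (by linarith : (0:ℝ) ≤ (α-β)*(s2-m) + ((α+β)*(s2+m) - 2*m))]
    have hC : (α+β)^2*(s2+m) + (α-β)^2*(s2-m) = 2*s2 := by linarith [h3]
    have hKey : 2*s2*(s2^2 - m^2) - ((α+β)*(s2+m))^2*(s2-m)
        ≤ ((α+β)*(s2+m) - 2*m)^2*(s2+m) := by
      nlinarith [mul_le_mul_of_nonneg_right hDsq hsm.le, hC, sq_nonneg (α-β)]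
    nlinarith [mul_nonneg (sub_nonneg.2 hy1) (neg_nonneg.2 hy2),
      mul_nonneg (neg_nonneg.2 hy2) (sq_nonneg (m - s2)),
      mul_nonneg (sub_nonneg.2 hy1) (sq_nonneg (s2 + 2*m)),
      mul_pos hs hs, sq_nonneg (s2+m), sq_nonneg (s2-m), hKey]
  · subst hm
    have hα : 0 ≤ α := by by_contra h; push_neg at h; nlinarith
    have hβ : 0 ≤ β := by by_contra h; push_neg at h; nlinarith
    nlinarith [h3, mul_nonneg hα hβ, mul_nonneg (add_nonneg hα hβ) (neg_nonneg.2 hcon)]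
  · nlinarith [h1, h2, mul_nonneg (neg_nonneg.2 hcon) hsm.le]

noncomputable def minkL (C : Fin 3 → ℝ) : (Fin 3 → ℝ) →ₗ[ℝ] ℝ where
  toFun x := mink x C
  map_add' x y := by unfold mink; simp only [Pi.add_apply]; ring
  map_smul' a x := by
    unfold mink; simp only [Pi.smul_apply, smul_eq_mul, RingHom.id_apply]; ring

lemma mem_span_of_mink (C a b x : Fin 3 → ℝ) (hC : mink C C = -1)
    (ha : mink a C = 0) (hb : mink b C = 0) (hx : mink x C = 0)
    (hab : LinearIndependent ℝ ![a, b]) :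
    ∃ α β : ℝ, α • a + β • b = x := by
  have hsurj : Function.Surjective (minkL C) := by
    intro y
    refine ⟨(-y) • C, ?_⟩
    show mink ((-y) • C) C = y
    unfold mink at hC ⊢
    simp only [Pi.smul_apply, smul_eq_mul]
    linear_combination (-y) * hC
  have hrange : LinearMap.range (minkL C) = ⊤ := LinearMap.range_eq_top.2 hsurj
  have hker : Module.finrank ℝ (LinearMap.ker (minkL C)) = 2 := by
    have h := LinearMap.finrank_range_add_finrank_ker (minkL C)
    rw [hrange, finrank_top, Module.finrank_fin_fun, Module.finrank_self] at h
    omega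
  have hle : Submodule.span ℝ {a, b} ≤ LinearMap.ker (minkL C) := by
    rw [Submodule.span_le]
    rintro y hy
    rcases hy with rfl | rfl
    · exact LinearMap.mem_ker.2 ha
    · exact LinearMap.mem_ker.2 hb
  have hrangeab : Set.range ![a, b] = {a, b} := by
    simp only [Matrix.range_cons, Matrix.range_empty, Set.union_empty,
      Set.union_singleton]
    rw [Set.pair_comm]
  have hsp : Module.finrank ℝ (Submodule.span ℝ ({a, b} : Set (Fin 3 → ℝ))) = 2 := by
    have h := finrank_span_eq_card hab
    rw [hrangeab] at h
    simpa using h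
  have heq : Submodule.span ℝ ({a, b} : Set (Fin 3 → ℝ)) = LinearMap.ker (minkL C) :=
    Submodule.eq_of_le_of_finrank_le hle (by rw [hker, hsp])
  have hxmem : x ∈ Submodule.span ℝ ({a, b} : Set (Fin 3 → ℝ)) := by
    rw [heq]; exact LinearMap.mem_ker.2 hx
  exact Submodule.mem_span_pair.1 hxmem

noncomputable def tv (R : ℝ) (c k : ℍ) : Fin 3 → ℝ :=
  fun i => hyp k i - Real.cosh R * hyp c i

lemma mink_comb_left (α β : ℝ) (x y z : Fin 3 → ℝ) :
    mink (α • x + β • y) z = α * mink x z + β * mink y z := by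
  unfold mink; simp only [Pi.add_apply, Pi.smul_apply, smul_eq_mul]; ring

lemma mink_tv_pair {R : ℝ} {c j k : ℍ} (hj : dist c j = R) (hk : dist c k = R) :
    mink (tv R c j) (tv R c k) = Real.cosh R ^ 2 - Real.cosh (dist j k) := by
  have expand : mink (tv R c j) (tv R c k) = mink (hyp j) (hyp k)
      - Real.cosh R * mink (hyp c) (hyp k) - Real.cosh R * mink (hyp j) (hyp c)
      + Real.cosh R ^ 2 * mink (hyp c) (hyp c) := by
    unfold tv mink; ring
  rw [expand, mink_hyp j k, mink_hyp c k, mink_hyp j c, mink_hyp_self c,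
    dist_comm j c, hj, hk]
  ring

lemma mink_tv_tan {R : ℝ} {c k : ℍ} (hk : dist c k = R) :
    mink (tv R c k) (hyp c) = 0 := by
  have expand : mink (tv R c k) (hyp c)
      = mink (hyp k) (hyp c) - Real.cosh R * mink (hyp c) (hyp c) := by
    unfold tv mink; ring
  rw [expand, mink_hyp k c, mink_hyp_self c, dist_comm k c, hk]
  ring

lemma mink_x_hyp (R : ℝ) (c k : ℍ) (x : Fin 3 → ℝ) :
    mink x (hyp k) = mink x (tv R c k) + Real.cosh R * mink x (hyp c) := by
  unfold tv mink; ring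

lemma mink_add_left (x y z : Fin 3 → ℝ) :
    mink (x + y) z = mink x z + mink y z := by
  unfold mink; simp only [Pi.add_apply]; ring

lemma mink_add_right (x y z : Fin 3 → ℝ) :
    mink x (y + z) = mink x y + mink x z := by
  unfold mink; simp only [Pi.add_apply]; ring

lemma mink_comb_right (α β : ℝ) (x y z : Fin 3 → ℝ) :
    mink z (α • x + β • y) = α * mink z x + β * mink z y := by
  unfold mink; simp only [Pi.add_apply, Pi.smul_apply, smul_eq_mul]; ring

lemma mink_zero_left (z : Fin 3 → ℝ) : mink 0 z = 0 := by
  unfold mink; simp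

set_option maxHeartbeats 1000000 in
lemma exists_pair (K : Set ℍ) (hK : IsCompact K) (c : ℍ) (hR : 0 < circumradius K)
    (hc : ∀ k ∈ K, dist c k ≤ circumradius K)
    (hS : ∃ k ∈ K, dist c k = circumradius K) :
    ∃ k₁ ∈ K, ∃ k₂ ∈ K,
      Real.cosh (circumradius K) ^ 2 + Real.sinh (circumradius K) ^ 2 / 2
        ≤ Real.cosh (dist k₁ k₂) := by
  set R := circumradius K with hRdef
  set S : Set ℍ := K ∩ {k | dist c k = R} with hSdef
  have hScl : IsClosed {k : ℍ | dist c k = R} :=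
    isClosed_eq (Continuous.dist continuous_const continuous_id) continuous_const
  have hScp : IsCompact S := hK.inter_right hScl
  have hSne : S.Nonempty := by obtain ⟨k, hk, hd⟩ := hS; exact ⟨k, hk, hd⟩
  have hmem : ∀ k : ℍ, k ∈ S ↔ k ∈ K ∧ dist c k = R := fun k => Iff.rfl
  clear_value R S
  obtain ⟨p, hpS, hmax0⟩ := (hScp.prod hScp).exists_isMaxOn (hSne.prod hSne)
    (continuous_dist.continuousOn :
      ContinuousOn (fun q : ℍ × ℍ => dist q.1 q.2) (S ×ˢ S))
  obtain ⟨a, b⟩ := p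
  have haS : a ∈ S := hpS.1
  have hbS : b ∈ S := hpS.2
  have hmax : ∀ j ∈ S, ∀ k ∈ S, dist j k ≤ dist a b := by
    intro j hj k hk
    have hjk : (j, k) ∈ S ×ˢ S := ⟨hj, hk⟩
    exact isMaxOn_iff.1 hmax0 (j, k) hjk
  have haK : a ∈ K := ((hmem a).1 haS).1
  have hbK : b ∈ K := ((hmem b).1 hbS).1
  have hda : dist c a = R := ((hmem a).1 haS).2
  have hdb : dist c b = R := ((hmem b).1 hbS).2
  set s2 := Real.sinh R ^ 2 with hs2def
  have hs2pos : 0 < s2 := by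
    rw [hs2def]
    exact pow_pos (Real.sinh_pos_iff.2 hR) 2
  have hcsq : Real.cosh R ^ 2 = Real.sinh R ^ 2 + 1 := Real.cosh_sq R
  have hw_self : ∀ k ∈ S, mink (tv R c k) (tv R c k) = s2 := by
    intro k hk
    rw [mink_tv_pair ((hmem k).1 hk).2 ((hmem k).1 hk).2, dist_self, Real.cosh_zero, hs2def]
    linarith
  set m := mink (tv R c a) (tv R c b) with hmdef
  have hmab : m = Real.cosh R ^ 2 - Real.cosh (dist a b) := mink_tv_pair hda hdb
  have hwba : mink (tv R c b) (tv R c a) = m := by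
    rw [mink_comm]
  have hmin : ∀ j ∈ S, ∀ k ∈ S, m ≤ mink (tv R c j) (tv R c k) := by
    intro j hj k hk
    rw [hmab, mink_tv_pair ((hmem j).1 hj).2 ((hmem k).1 hk).2]
    have h1 : dist j k ≤ dist a b := hmax j hj k hk
    have hcosh : Real.cosh (dist j k) ≤ Real.cosh (dist a b) := by
      rw [Real.cosh_le_cosh, abs_of_nonneg dist_nonneg, abs_of_nonneg dist_nonneg]
      exact h1
    linarith
  by_cases hm : m ≤ -s2/2
  · refine ⟨a, haK, b, hbK, ?_⟩
    have h1 : Real.cosh (dist a b) = Real.cosh R ^ 2 - m := by linarith [hmab]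
    rw [h1]
    linarith
  push_neg at hm
  exfalso
  have hmle : m ≤ s2 := by
    have h1 : 1 ≤ Real.cosh (dist a b) := Real.one_le_cosh _
    rw [hs2def]
    nlinarith [hmab]
  by_cases hm2 : m < s2
  · -- independent case
    have hind : LinearIndependent ℝ ![tv R c a, tv R c b] := by
      rw [LinearIndependent.pair_iff]
      intro s t hst
      have f1 : s * s2 + t * m = 0 := by
        have expand := mink_comb_left s t (tv R c a) (tv R c b) (tv R c a)
        rw [hst, mink_zero_left, hw_self a haS, hwba] at expand
        linarith
      have f2 : s * m + t * s2 = 0 := by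
        have expand := mink_comb_left s t (tv R c a) (tv R c b) (tv R c b)
        rw [hst, mink_zero_left, hw_self b hbS, ← hmdef] at expand
        linarith
      have hs0 : s = 0 := by
        have h4 : s * (s2^2 - m^2) = 0 := by linear_combination s2 * f1 - m * f2
        have h5 : s2^2 - m^2 ≠ 0 := by nlinarith
        rcases mul_eq_zero.1 h4 with h | h
        · exact h
        · exact absurd h h5
      have ht0 : t = 0 := by
        rw [hs0] at f2
        have h6 : t * s2 = 0 := by linarith
        rcases mul_eq_zero.1 h6 with h | h
        · exact h
        · exact absurd h hs2pos.ne'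
      exact ⟨hs0, ht0⟩
    set v : Fin 3 → ℝ := tv R c a + tv R c b with hvdef
    have hva : mink v (tv R c a) = s2 + m := by
      rw [hvdef, mink_add_left, hw_self a haS, hwba]
    have hvb : mink v (tv R c b) = m + s2 := by
      rw [hvdef, mink_add_left, ← hmdef, hw_self b hbS]
    have hv : mink v (hyp c) = 0 := by
      rw [hvdef, mink_add_left, mink_tv_tan hda, mink_tv_tan hdb]
      ring
    have hq : 0 < mink v v := by
      rw [hvdef, mink_add_left, mink_add_right, mink_add_right,
        hw_self a haS, hw_self b hbS, ← hmdef, hwba]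
      linarith
    rw [hRdef] at hR hc hS
    refine no_improving K hK c hR hc hS v hv hq ?_
    intro k hk hdk
    rw [← hRdef] at hdk
    have hkS : k ∈ S := (hmem k).2 ⟨hk, hdk⟩
    obtain ⟨α, β, hαβ⟩ := mem_span_of_mink (hyp c) (tv R c a) (tv R c b) (tv R c k)
      (mink_hyp_self c) (mink_tv_tan hda) (mink_tv_tan hdb) (mink_tv_tan hdk) hind
    have c1 : m ≤ α * s2 + β * m := by
      have h1 := hmin a haS k hkS
      rw [mink_comm (tv R c a) (tv R c k), ← hαβ, mink_comb_left,
        hw_self a haS, hwba] at h1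
      linarith
    have c2 : m ≤ α * m + β * s2 := by
      have h1 := hmin b hbS k hkS
      rw [mink_comm (tv R c b) (tv R c k), ← hαβ, mink_comb_left,
        ← hmdef, hw_self b hbS] at h1
      linarith
    have c3 : α^2*s2 + 2*α*β*m + β^2*s2 = s2 := by
      have h1 := hw_self k hkS
      rw [← hαβ, mink_comb_left, mink_comb_right, mink_comb_right,
        hw_self a haS, hw_self b hbS, ← hmdef, hwba] at h1
      linear_combination h1
    have hsum := jung_algebra s2 m α β hs2pos hm hm2 c1 c2 c3
    have e5 : mink v (hyp k) = (α + β) * (s2 + m) := by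
      rw [mink_x_hyp R c k v, hv, ← hαβ, mink_comb_right, hva, hvb]
      ring
    rw [e5]
    exact mul_pos hsum (by linarith)
  · -- degenerate case : all sphere points coincide with a
    have hmeq : m = s2 := le_antisymm hmle (not_lt.1 hm2)
    have hdab : dist a b = 0 := by
      by_contra hne
      have hd0 : 0 < dist a b := lt_of_le_of_ne dist_nonneg (Ne.symm hne)
      have h1 : Real.cosh 0 < Real.cosh (dist a b) := by
        rw [Real.cosh_lt_cosh, abs_zero, abs_of_nonneg dist_nonneg]
        exact hd0
      rw [Real.cosh_zero] at h1
      rw [hs2def] at hmeq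
      nlinarith [hmab]
    have hSa : ∀ k ∈ S, k = a := by
      intro k hk
      have h1 : dist a k ≤ dist a b := hmax a haS k hk
      rw [hdab] at h1
      exact (dist_le_zero.1 h1).symm
    rw [hRdef] at hR hc hS
    refine no_improving K hK c hR hc hS (tv R c a) (mink_tv_tan hda) ?_ ?_
    · rw [hw_self a haS]; exact hs2pos
    · intro k hk hdk
      rw [← hRdef] at hdk
      have hkS : k ∈ S := (hmem k).2 ⟨hk, hdk⟩
      rw [hSa k hkS]
      rw [mink_x_hyp R c a (tv R c a), hw_self a haS, mink_tv_tan hda]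
      nlinarith [hs2pos]
end Pair

end JungAux

/-- hyperbolic Jung inequality in the plane: a compact set
`K ⊆ H²` of diameter `D > 0` has circumradius `R(K)` with `D/2 ≤ R(K)` and
`sinh R(K) ≤ (2/√3)·sinh(D/2)` (the right-hand side corresponding to the
circumradius of the regular hyperbolic triangle of side `D`); in particular
`R(K) < D`. -/
theorem stmt_18 (K : Set UpperHalfPlane) (hKcp : IsCompact K)
    (D : ℝ) (hD : 0 < D) (hdiam : Metric.diam K = D) :
    D / 2 ≤ circumradius K ∧
      Real.sinh (circumradius K) ≤ (2 / Real.sqrt 3) * Real.sinh (D / 2) ∧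
      circumradius K < D := by
  have hne : K.Nonempty := by
    rcases K.eq_empty_or_nonempty with h | h
    · rw [h, Metric.diam_empty] at hdiam; linarith
    · exact h
  have hhalf : D / 2 ≤ circumradius K := by
    refine le_csInf (JungAux.A_nonempty K hKcp) ?_
    rintro r ⟨hr0, z, hz⟩
    have hdr : Metric.diam K ≤ 2 * r := by
      refine Metric.diam_le_of_forall_dist_le (by linarith) ?_
      intro x hx y hy
      have h1 : dist x z ≤ r := Metric.mem_closedBall.1 (hz hx)
      have h2 : dist y z ≤ r := Metric.mem_closedBall.1 (hz hy)
      calc dist x y ≤ dist x z + dist z y := dist_triangle _ _ _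
      _ ≤ 2 * r := by rw [dist_comm z y]; linarith
    rw [hdiam] at hdr; linarith
  have hR : 0 < circumradius K := lt_of_lt_of_le (by linarith) hhalf
  obtain ⟨c, hc, hS⟩ := JungAux.exists_center K hKcp hne
  obtain ⟨k₁, hk₁, k₂, hk₂, hineq⟩ := JungAux.exists_pair K hKcp c hR hc hS
  have hd12 : dist k₁ k₂ ≤ D := by
    rw [← hdiam]; exact Metric.dist_le_diam_of_mem hKcp.isBounded hk₁ hk₂
  have hcosh12 : Real.cosh (dist k₁ k₂) ≤ Real.cosh D := by
    rw [Real.cosh_le_cosh, abs_of_nonneg dist_nonneg, abs_of_nonneg hD.le]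
    exact hd12
  have hcoshD : Real.cosh D = 1 + 2 * Real.sinh (D / 2) ^ 2 := by
    have h1 := Real.cosh_two_mul (D / 2)
    have h2 := Real.cosh_sq (D / 2)
    rw [show 2 * (D / 2) = D by ring] at h1
    linarith
  have hkey : Real.sinh (circumradius K) ^ 2 ≤ 4 / 3 * Real.sinh (D / 2) ^ 2 := by
    have h2 := Real.cosh_sq (circumradius K)
    nlinarith [hineq, hcosh12]
  have hsqrt3 : (0:ℝ) < Real.sqrt 3 := Real.sqrt_pos.2 (by norm_num)
  have hsq3 : Real.sqrt 3 ^ 2 = 3 := Real.sq_sqrt (by norm_num)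
  have hb2 : (2 / Real.sqrt 3) ^ 2 = 4 / 3 := by
    rw [div_pow, hsq3]; norm_num
  have hsinhhalf : 0 < Real.sinh (D / 2) := Real.sinh_pos_iff.2 (by linarith)
  have hsinhR : 0 ≤ Real.sinh (circumradius K) := Real.sinh_nonneg_iff.2 hR.le
  have hmain : Real.sinh (circumradius K) ≤ 2 / Real.sqrt 3 * Real.sinh (D / 2) := by
    have hb : 0 < 2 / Real.sqrt 3 * Real.sinh (D / 2) := by positivity
    nlinarith [hkey, hb2, hb, hsinhR]
  refine ⟨hhalf, hmain, ?_⟩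
  have hsinhD : Real.sinh D = 2 * Real.sinh (D / 2) * Real.cosh (D / 2) := by
    have h1 := Real.sinh_two_mul (D / 2)
    rw [show 2 * (D / 2) = D by ring] at h1
    exact h1
  have hch : 1 ≤ Real.cosh (D / 2) := Real.one_le_cosh _
  have h3 : 2 / Real.sqrt 3 < 2 := by
    rw [div_lt_iff₀ hsqrt3]
    nlinarith [hsq3, hsqrt3]
  have h1 : Real.sinh (circumradius K) < Real.sinh D := by nlinarith [hsinhhalf, hmain]
  exact Real.sinh_lt_sinh.1 h1
end

section
/- (Hyperbolic Scott theorem in the plane.) Let K ⊆ H² be a convex body with Metric.diam K = D > 0, let R(K) be its circumradius and p its circumcenter, so B = Metric.closedBall p (R(K)) is the circumscribed ball of K. Then there exists a completion K̃ of K whose circumscribed ball is also B: there is a diametrically complete set K̃ with K ⊆ K̃ ⊆ B and Metric.diam K̃ = D; consequently R(K̃) = R(K) and the circumcenter of K̃ is p. -/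
open UpperHalfPlane Real Complex Matrix MatrixGroups

lemma vert_ext (p y : UpperHalfPlane) (h : p.re = y.re) (t : ℝ) (ht : 0 ≤ t) :
    ∃ z : UpperHalfPlane, dist z p ≤ t ∧ t + dist p y ≤ dist z y := by
  rw [UpperHalfPlane.dist_of_re_eq h]
  rcases le_total p.im y.im with him | him
  · refine ⟨mk ⟨p.re, Real.exp (Real.log p.im - t)⟩ (Real.exp_pos _), ?_, ?_⟩
    · rw [UpperHalfPlane.dist_of_re_eq (by rw [mk_re])]
      simp only [mk_im]
      rw [Real.log_exp, Real.dist_eq]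
      simp [_root_.abs_of_nonpos, ht]
    · rw [UpperHalfPlane.dist_of_re_eq (by rw [mk_re]; exact h)]
      simp only [mk_im]
      rw [Real.log_exp, Real.dist_eq, Real.dist_eq]
      have hlog : Real.log p.im ≤ Real.log y.im :=
        Real.log_le_log p.im_pos him
      rw [_root_.abs_of_nonpos (by linarith), _root_.abs_of_nonpos (by linarith)]
      linarith
  · refine ⟨mk ⟨p.re, Real.exp (Real.log p.im + t)⟩ (Real.exp_pos _), ?_, ?_⟩
    · rw [UpperHalfPlane.dist_of_re_eq (by rw [mk_re])]
      simp only [mk_im]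
      rw [Real.log_exp, Real.dist_eq]
      simp [_root_.abs_of_nonneg, ht]
    · rw [UpperHalfPlane.dist_of_re_eq (by rw [mk_re]; exact h)]
      simp only [mk_im]
      rw [Real.log_exp, Real.dist_eq, Real.dist_eq]
      have hlog : Real.log y.im ≤ Real.log p.im :=
        Real.log_le_log y.im_pos him
      rw [_root_.abs_of_nonneg (by linarith), _root_.abs_of_nonneg (by linarith)]
      linarith

noncomputable def mobMat (a b : ℝ) (hab : a < b) : SL(2, ℝ) :=
  ⟨!![(Real.sqrt (b - a))⁻¹, -b * (Real.sqrt (b - a))⁻¹;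
      (Real.sqrt (b - a))⁻¹, -a * (Real.sqrt (b - a))⁻¹], by
    have h0 : (0:ℝ) < b - a := by linarith
    have hs : Real.sqrt (b - a) ≠ 0 := by positivity
    rw [Matrix.det_fin_two_of]
    have hu : Real.sqrt (b - a) * Real.sqrt (b - a) = b - a := Real.mul_self_sqrt h0.le
    have h1 : (Real.sqrt (b - a))⁻¹ * (-a * (Real.sqrt (b - a))⁻¹) -
        -b * (Real.sqrt (b - a))⁻¹ * (Real.sqrt (b - a))⁻¹ =
        (b - a) * ((Real.sqrt (b - a))⁻¹ * (Real.sqrt (b - a))⁻¹) := by ring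
    rw [h1, ← hu]
    field_simp
    rw [Real.sqrt_sq (Real.sqrt_nonneg _)]⟩

lemma mobMat_re_smul (a b : ℝ) (hab : a < b) (z : UpperHalfPlane)
    (hz : Complex.normSq ((z : ℂ) - ((a + b)/2 : ℝ)) = ((b - a)/2)^2) :
    ((mobMat a b hab) • z).re = 0 := by
  have h0 : (0:ℝ) < b - a := by linarith
  have hs : (0:ℝ) < Real.sqrt (b - a) := Real.sqrt_pos.2 h0
  set s : ℝ := (Real.sqrt (b - a))⁻¹ with hsdef
  have hsne : (s : ℂ) ≠ 0 := by
    simp only [ne_eq, Complex.ofReal_eq_zero]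
    positivity
  rw [specialLinearGroup_apply, mk_re]
  have e1 : (mobMat a b hab) 0 0 = s := rfl
  have e2 : (mobMat a b hab) 0 1 = -b * s := rfl
  have e3 : (mobMat a b hab) 1 0 = s := rfl
  have e4 : (mobMat a b hab) 1 1 = -a * s := rfl
  rw [e1, e2, e3, e4]
  simp only [Algebra.algebraMap_self_apply, Complex.ofReal_mul, Complex.ofReal_neg]
  have fac : ∀ c : ℝ, (s : ℂ) * (z : ℂ) + -(c : ℂ) * s = s * ((z : ℂ) - c) := by
    intro c; ring
  rw [fac a, fac b, mul_div_mul_left _ _ hsne, Complex.div_re]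
  have hzre : ((z : ℂ) - (b : ℂ)).re = z.re - b := by simp [coe_re]
  have hzre' : ((z : ℂ) - (a : ℂ)).re = z.re - a := by simp [coe_re]
  have hzim : ((z : ℂ) - (b : ℂ)).im = z.im := by simp [coe_im]
  have hzim' : ((z : ℂ) - (a : ℂ)).im = z.im := by simp [coe_im]
  rw [hzre, hzre', hzim, hzim', ← add_div, div_eq_zero_iff]
  left
  have hz' : (z.re - (a + b)/2)^2 + z.im^2 = ((b - a)/2)^2 := by
    rw [Complex.normSq_apply] at hz
    simp only [Complex.sub_re, Complex.sub_im, Complex.ofReal_re, Complex.ofReal_im,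
      coe_re, coe_im, sub_zero] at hz
    nlinarith [hz]
  nlinarith [hz']

lemma exists_ext (p y : UpperHalfPlane) (t : ℝ) (ht : 0 ≤ t) :
    ∃ z : UpperHalfPlane, dist z p ≤ t ∧ t + dist p y ≤ dist z y := by
  by_cases h : p.re = y.re
  · exact vert_ext p y h t ht
  · have hne : y.re - p.re ≠ 0 := fun hc => h (by linarith [sub_eq_zero.mp hc])
    set c : ℝ := (y.re^2 + y.im^2 - p.re^2 - p.im^2) / (2*(y.re - p.re)) with hc
    set r : ℝ := Real.sqrt (Complex.normSq ((p:ℂ) - c)) with hr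
    have hPc : Complex.normSq ((p:ℂ) - c) = (p.re - c)^2 + p.im^2 := by
      rw [Complex.normSq_apply]
      simp [Complex.sub_re, Complex.sub_im, coe_re, coe_im]
      ring
    have hYc : Complex.normSq ((y:ℂ) - c) = (y.re - c)^2 + y.im^2 := by
      rw [Complex.normSq_apply]
      simp [Complex.sub_re, Complex.sub_im, coe_re, coe_im]
      ring
    have hkey : Complex.normSq ((y:ℂ) - c) = Complex.normSq ((p:ℂ) - c) := by
      rw [hPc, hYc, hc]
      field_simp
      ring
    have hr0 : 0 < r := by
      rw [hr]
      apply Real.sqrt_pos.2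
      apply Complex.normSq_pos.2
      intro hzero
      have : ((p:ℂ) - c).im = 0 := by rw [hzero]; simp
      simp only [Complex.sub_im, Complex.ofReal_im, coe_im, sub_zero] at this
      exact p.im_ne_zero this
    have hr2 : r^2 = Complex.normSq ((p:ℂ) - c) := Real.sq_sqrt (Complex.normSq_nonneg _)
    have hab : c - r < c + r := by linarith
    set g := mobMat (c - r) (c + r) hab with hg
    have hmid : ((c - r) + (c + r))/2 = c := by ring
    have hhalf : ((c + r) - (c - r))/2 = r := by ring
    have hzp : Complex.normSq ((p:ℂ) - ((((c - r) + (c + r))/2 : ℝ) : ℂ)) =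
        (((c + r) - (c - r))/2)^2 := by rw [hmid, hhalf, hr2]
    have hzy : Complex.normSq ((y:ℂ) - ((((c - r) + (c + r))/2 : ℝ) : ℂ)) =
        (((c + r) - (c - r))/2)^2 := by rw [hmid, hhalf, hkey, hr2]
    have hre : (g • p).re = (g • y).re := by
      rw [mobMat_re_smul _ _ hab p hzp, mobMat_re_smul _ _ hab y hzy]
    obtain ⟨z', h1, h2⟩ := vert_ext (g • p) (g • y) hre t ht
    refine ⟨g⁻¹ • z', ?_, ?_⟩
    · have : dist (g⁻¹ • z') p = dist z' (g • p) := by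
        rw [← dist_smul g (g⁻¹ • z') p, smul_inv_smul]
      rw [this]; exact h1
    · have e1 : dist (g⁻¹ • z') y = dist z' (g • y) := by
        rw [← dist_smul g (g⁻¹ • z') y, smul_inv_smul]
      have e2 : dist p y = dist (g • p) (g • y) := (dist_smul g p y).symm
      rw [e1, e2]; exact h2

/-- hyperbolic Scott theorem in the plane: a convex body
`K ⊆ H²` of diameter `D > 0`, with circumcenter `p` (so
`B = closedBall p (R(K))` is its circumscribed ball), admits a completion `K̃`
with the same circumscribed ball: a diametrically complete set `K̃` with
`K ⊆ K̃ ⊆ B`, `diam K̃ = D`, `R(K̃) = R(K)`, and circumcenter `p`. -/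
theorem stmt_19 (K : Set UpperHalfPlane) (hKcp : IsCompact K)
    (hKint : (interior K).Nonempty) (hKcv : HypConvex K)
    (D : ℝ) (hD : 0 < D) (hdiam : Metric.diam K = D)
    (p : UpperHalfPlane) (hp : K ⊆ Metric.closedBall p (circumradius K)) :
    ∃ Kt : Set UpperHalfPlane, DiamComplete Kt ∧ K ⊆ Kt ∧
      Kt ⊆ Metric.closedBall p (circumradius K) ∧ Metric.diam Kt = D ∧
      circumradius Kt = circumradius K ∧
      Kt ⊆ Metric.closedBall p (circumradius Kt) := by
  classical
  set R := circumradius K with hR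
  have hKne : K.Nonempty := hKint.mono interior_subset
  obtain ⟨x₀, hx₀⟩ := hKne
  have hKb : Bornology.IsBounded K := hKcp.isBounded
  have hbdd : BddBelow {r : ℝ | 0 ≤ r ∧ ∃ z : UpperHalfPlane, K ⊆ Metric.closedBall z r} :=
    ⟨0, fun r hr => hr.1⟩
  have hDmem : D ∈ {r : ℝ | 0 ≤ r ∧ ∃ z : UpperHalfPlane, K ⊆ Metric.closedBall z r} := by
    refine ⟨hD.le, x₀, fun x hx => ?_⟩
    rw [Metric.mem_closedBall]
    calc dist x x₀ ≤ Metric.diam K := Metric.dist_le_diam_of_mem hKb hx hx₀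
      _ = D := hdiam
  have hRleD : R ≤ D := csInf_le hbdd hDmem
  have hhalf : D / 2 ≤ R := by
    apply le_csInf ⟨D, hDmem⟩
    rintro r ⟨hr0, z, hz⟩
    have : D ≤ 2 * r := by
      calc D = Metric.diam K := hdiam.symm
        _ ≤ Metric.diam (Metric.closedBall z r) :=
          Metric.diam_mono hz Metric.isBounded_closedBall
        _ ≤ 2 * r := Metric.diam_closedBall hr0
    linarith
  have hR0 : 0 < R := by linarith
  have hDRR : D - R ≤ R := by linarith
  have hDR0 : 0 ≤ D - R := by linarith
  set A : Set (Set UpperHalfPlane) :=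
    {S | K ⊆ S ∧ S ⊆ Metric.closedBall p R ∧ ∀ x ∈ S, ∀ y ∈ S, dist x y ≤ D} with hA
  have hKA : K ∈ A := by
    refine ⟨subset_rfl, hp, fun x hx y hy => ?_⟩
    calc dist x y ≤ Metric.diam K := Metric.dist_le_diam_of_mem hKb hx hy
      _ = D := hdiam
  have hchains : ∀ c ⊆ A, IsChain (· ⊆ ·) c → c.Nonempty →
      ∃ ub ∈ A, ∀ s ∈ c, s ⊆ ub := by
    rintro c hcA hchain ⟨s, hs⟩
    refine ⟨⋃₀ c, ⟨(hcA hs).1.trans (Set.subset_sUnion_of_mem hs),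
      Set.sUnion_subset fun u hu => (hcA hu).2.1, ?_⟩, fun u hu => Set.subset_sUnion_of_mem hu⟩
    rintro x ⟨u, hu, hxu⟩ y ⟨v, hv, hyv⟩
    rcases hchain.total hu hv with huv | hvu
    · exact (hcA hv).2.2 x (huv hxu) y hyv
    · exact (hcA hu).2.2 x hxu y (hvu hyv)
  obtain ⟨M, hKM, hMA, hMmax⟩ : ∃ M, K ⊆ M ∧ M ∈ A ∧ ∀ S ∈ A, M ⊆ S → S ⊆ M := by
    obtain ⟨M, hKM, hM⟩ := zorn_subset_nonempty A hchains K hKA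
    exact ⟨M, hKM, hM.1, fun S hS hMS => hM.2 hS hMS⟩
  have hMB : M ⊆ Metric.closedBall p R := hMA.2.1
  have hMbd : Bornology.IsBounded M := Metric.isBounded_closedBall.subset hMB
  have hMdiam : Metric.diam M = D := by
    apply le_antisymm (Metric.diam_le_of_forall_dist_le hD.le hMA.2.2)
    calc D = Metric.diam K := hdiam.symm
      _ ≤ Metric.diam M := Metric.diam_mono hKM hMbd
  have hball : Metric.closedBall p (D - R) ⊆ M := by
    intro z hz
    rw [Metric.mem_closedBall] at hz
    have : M ∪ {z} ∈ A := by
      refine ⟨hKM.trans Set.subset_union_left, ?_, ?_⟩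
      · refine Set.union_subset hMB ?_
        simp only [Set.singleton_subset_iff, Metric.mem_closedBall]
        linarith
      · rintro x (hx | hx) y (hy | hy)
        · exact hMA.2.2 x hx y hy
        · rw [Set.mem_singleton_iff] at hy; subst hy
          have := hMB hx; rw [Metric.mem_closedBall] at this
          calc dist x y ≤ dist x p + dist p y := dist_triangle x p y
            _ ≤ R + (D - R) := add_le_add this (by rwa [dist_comm])
            _ = D := by ring
        · rw [Set.mem_singleton_iff] at hx; subst hx
          have := hMB hy; rw [Metric.mem_closedBall] at this
          calc dist x y ≤ dist x p + dist p y := dist_triangle x p y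
            _ ≤ (D - R) + R := add_le_add hz (by rwa [dist_comm] at this)
            _ = D := by ring
        · rw [Set.mem_singleton_iff] at hx hy; subst hx; subst hy; simp [hD.le]
    exact hMmax _ this Set.subset_union_left (Set.mem_union_right _ rfl)
  have hcompl : DiamComplete M := by
    intro y hy
    rw [hMdiam]
    have hyb : Bornology.IsBounded (M ∪ {y}) := hMbd.union Bornology.isBounded_singleton
    by_cases hyB : dist y p ≤ R
    · have hnA : M ∪ {y} ∉ A := by
        intro hA
        exact hy (hMmax _ hA Set.subset_union_left (Set.mem_union_right _ rfl))
      have h2 : ¬ ∀ x ∈ M ∪ {y}, ∀ x' ∈ M ∪ {y}, dist x x' ≤ D := by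
        intro hpair
        exact hnA ⟨hKM.trans Set.subset_union_left,
          Set.union_subset hMB (by simpa [Set.singleton_subset_iff] using hyB), hpair⟩
      push_neg at h2
      obtain ⟨u, hu, v, hv, huv⟩ := h2
      calc D < dist u v := huv
        _ ≤ Metric.diam (M ∪ {y}) := Metric.dist_le_diam_of_mem hyb hu hv
    · push_neg at hyB
      rw [dist_comm] at hyB
      obtain ⟨z, hz1, hz2⟩ := exists_ext p y (D - R) hDR0
      have hzM : z ∈ M := hball (by rwa [Metric.mem_closedBall])
      calc D < (D - R) + dist p y := by linarith
        _ ≤ dist z y := hz2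
        _ ≤ Metric.diam (M ∪ {y}) :=
          Metric.dist_le_diam_of_mem hyb (Set.mem_union_left _ hzM)
            (Set.mem_union_right _ rfl)
  have hcirc : circumradius M = R := by
    apply le_antisymm
    · exact csInf_le ⟨0, fun r hr => hr.1⟩ ⟨hR0.le, p, hMB⟩
    · refine csInf_le_csInf hbdd ⟨R, hR0.le, p, hMB⟩ ?_
      rintro r ⟨hr0, z, hz⟩
      exact ⟨hr0, z, hKM.trans hz⟩
  exact ⟨M, hcompl, hKM, hMB, hMdiam, hcirc, by rw [hcirc]; exact hMB⟩
end
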